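/- arXiv:math/0608796 — 7 statements merged into one kernel-verified Lean document; each statement's English description precedes it below -/
import Mathlib

section
/- The equation x^2 = y^a + ε₁·y^b + ε₂, with ε₁, ε₂ ∈ {1, −1}, has no positive integer solutions (x, y, a, b) with a > b, a even, y > 2, and y not a perfect power of another integer (i.e., y is not of the form m^k for integers m ≥ 1 and k ≥ 2). -/
/-!
Write `a = 2c`. If `b ≤ c`, the right-hand side lies strictly between `(y^c - 1)^2` and
`(y^c + 1)^2` and differs from `y^(2c)`, so `c < b`. Put `Q = y^(b-c)`, `R = y^(a-b)` and
`l = 2R + ε₁`; then `y^c = QR` and `k = Q l - 2x` satisfies `Q^2 + k^2 = 2l Q k + 4ε₂` with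
`0 < k < Q`. By Vieta jumping this has no positive solution when `ε₂ = -1`, and when `ε₂ = 1`
its solutions are `(Q, k) = (2 yₙ₊₁, 2 yₙ)`, where `yₙ` is the Pell sequence with parameter `l`.
Since `l` is odd, `2^j ∣ yₙ` forces `2^j ∣ n`, and `yₙ₊₁ ≥ lⁿ ≥ yⁿ`; with `Q = y^(b-c)` these
leave only `y^2 = Q = 4l`, which is impossible because `l ≡ ε₁ (mod y)` is odd.
-/

namespace Pell

variable {a : ℕ} (a1 : 1 < a)

theorem odd_xn (ha : Odd a) (n : ℕ) : Odd (xn a1 n) := by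
  induction n using Nat.twoStepInduction with
  | zero => simp
  | one => simpa
  | more n ih _ =>
    have hsum : Even (xn a1 (n + 2) + xn a1 n) := by
      rw [xn_succ_succ, mul_assoc]
      exact even_two_mul _
    rw [← Nat.not_even_iff_odd] at ih ⊢
    exact fun h => ih (Nat.even_add.mp hsum |>.mp h)

theorem yn_two_mul (n : ℕ) : yn a1 (2 * n) = 2 * (xn a1 n * yn a1 n) := by
  rw [two_mul, yn_add]
  ring

theorem two_pow_dvd_of_two_pow_dvd_yn (ha : Odd a) {j n : ℕ} (h : 2 ^ j ∣ yn a1 n) :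
    2 ^ j ∣ n := by
  induction j generalizing n with
  | zero => exact one_dvd n
  | succ j ih =>
    have h2 : 2 ∣ yn a1 n := (dvd_pow_self 2 j.succ_ne_zero).trans h
    obtain ⟨m, rfl⟩ := ((yn_modEq_two a1 n).dvd_iff dvd_rfl).mp h2
    rw [yn_two_mul, pow_succ', Nat.mul_dvd_mul_iff_left two_pos] at h
    have hcop : Nat.Coprime (2 ^ j) (xn a1 m) :=
      (Nat.coprime_two_left.mpr (odd_xn a1 ha m)).pow_left j
    rw [pow_succ']
    exact Nat.mul_dvd_mul_left 2 (ih (hcop.dvd_of_dvd_mul_left h))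

theorem exists_eq_two_mul_yn_of_sq_add_sq_eq {A B : ℕ} (hBA : B < A)
    (h : A ^ 2 + B ^ 2 = 2 * a * A * B + 4) :
    ∃ n, A = 2 * yn a1 (n + 1) ∧ B = 2 * yn a1 n := by
  induction B using Nat.strong_induction_on generalizing A with
  | _ B ih =>
  rcases (by omega : B = 0 ∨ B = 1 ∨ 2 ≤ B) with rfl | rfl | hB
  · refine ⟨0, ?_, by simp⟩
    simp only [zero_add, yn_one]
    nlinarith
  · rcases le_or_gt A (2 * a) with hA | hA <;> nlinarith
  · -- Vieta jump: `(A, B) ↦ (B, 2aB - A)`.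
    have hle : A ≤ 2 * a * B := by nlinarith
    obtain ⟨A', hA'⟩ := Nat.exists_eq_add_of_le hle
    have hAA' : A * A' + 4 = B ^ 2 := by nlinarith
    have hA'B : A' < B := by nlinarith
    obtain ⟨n, hB, hA'n⟩ := ih A' hA'B hA'B (by nlinarith)
    refine ⟨n + 1, ?_, hB⟩
    have := yn_succ_succ a1 n
    nlinarith

theorem eq_two_and_eq_one_of_pow_eq_two_mul_yn (ha : Odd a) {y d n : ℕ} (hy : 1 < y)
    (hya : y ≤ a) (hn : 0 < n) (hQ : y ^ d = 2 * yn a1 (n + 1)) : d = 2 ∧ n = 1 := by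
  have hnd : n < d := by
    refine (Nat.pow_lt_pow_iff_right hy).mp ?_
    calc y ^ n ≤ a ^ n := Nat.pow_le_pow_left hya n
      _ ≤ xn a1 n := xn_ge_a_pow a1 n
      _ ≤ yn a1 (n + 1) := by rw [yn_succ]; omega
      _ < y ^ d := by
        have := strictMono_y a1 (by omega : 0 < n + 1)
        rw [yn_zero] at this
        omega
  have hdvd : 2 ^ (d - 1) ∣ n + 1 := by
    refine two_pow_dvd_of_two_pow_dvd_yn a1 ha ?_
    have h2y : 2 ∣ y := Nat.prime_two.dvd_of_dvd_pow (n := d) ⟨_, hQ⟩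
    have := pow_dvd_pow_of_dvd h2y d
    rw [hQ, ← Nat.sub_add_cancel (by omega : 1 ≤ d), pow_succ'] at this
    exact Nat.dvd_of_mul_dvd_mul_left two_pos this
  have := Nat.le_of_dvd n.succ_pos hdvd
  have := @Nat.lt_two_pow_self (d - 2)
  have : 2 ^ (d - 1) = 2 * 2 ^ (d - 2) := by rw [← pow_succ']; congr 1; omega
  omega

end Pell

theorem sq_add_sq_add_four_ne_mul {L A B : ℕ} (hL : 6 < L) (hA : 0 < A) (hB : 0 < B) :
    A ^ 2 + B ^ 2 + 4 ≠ L * A * B := by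
  induction hn : A + B using Nat.strong_induction_on generalizing A B with
  | _ n ih =>
  wlog hBA : B ≤ A generalizing A B
  · intro h
    exact this hB hA (by omega) (by omega) (by linarith)
  intro h
  have hlt : A < L * B := by nlinarith
  obtain ⟨A', hA'⟩ := Nat.exists_eq_add_of_le hlt.le
  have hAA' : A * A' = B ^ 2 + 4 := by nlinarith
  have hA'0 : 0 < A' := by nlinarith
  have hA'A : A' < A := by
    by_contra! hAA
    rcases hBA.lt_or_eq with hBA | rfl
    · have : B = 1 := by nlinarith
      subst this
      have : A = 2 := by nlinarith
      subst this
      omega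
    · nlinarith
  exact ih (A' + B) (by omega) hA'0 hB rfl (by nlinarith)

theorem sq_ne_sq_add {X P t : ℤ} (ht0 : t ≠ 0) (ht : |t| < 2 * P - 1) : X ^ 2 ≠ P ^ 2 + t := by
  intro h
  rw [← sq_abs X] at h
  obtain ⟨htl, htu⟩ := abs_lt.mp ht
  rcases lt_trichotomy |X| P with hlt | heq | hgt
  · nlinarith [abs_nonneg X]
  · exact ht0 (by rw [heq] at h; linarith)
  · nlinarith

theorem sq_ne_pow_add_pow_of_le {X Y ε₁ ε₂ : ℤ} {b c : ℕ} (hY : 3 ≤ Y) (hb : 0 < b)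
    (hbc : b ≤ c) (hε₁ : ε₁ = 1 ∨ ε₁ = -1) (hε₂ : ε₂ = 1 ∨ ε₂ = -1) :
    X ^ 2 ≠ Y ^ (c + c) + ε₁ * Y ^ b + ε₂ := by
  have hYb : 3 ≤ Y ^ b := le_self_pow₀ (by linarith) hb.ne' |>.trans' hY
  have hYbc : Y ^ b ≤ Y ^ c := pow_le_pow_right₀ (by linarith) hbc
  rw [pow_add, ← sq, add_assoc]
  refine sq_ne_sq_add ?_ (abs_lt.mpr ?_) <;> rcases hε₁ with rfl | rfl <;>
    rcases hε₂ with rfl | rfl <;> omega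

theorem exists_sq_add_sq_eq_of_sq_eq {X Q R ε₁ ε₂ : ℤ} (hε₁ : ε₁ = 1 ∨ ε₁ = -1)
    (hε₂ : ε₂ = 1 ∨ ε₂ = -1) (hX : 0 ≤ X) (hQ : 3 ≤ Q) (hR : 3 ≤ R)
    (h : X ^ 2 = (Q * R) ^ 2 + ε₁ * (Q * R * Q) + ε₂) :
    ∃ k, 0 < k ∧ k < Q ∧ Q ^ 2 + k ^ 2 = 2 * (2 * R + ε₁) * Q * k + 4 * ε₂ := by
  set u := Q * (2 * R + ε₁)
  have hu : 5 * Q ≤ u := by rcases hε₁ with rfl | rfl <;> nlinarith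
  have huv : (u - 2 * X) * (u + 2 * X) = Q ^ 2 - 4 * ε₂ := by
    rcases hε₁ with rfl | rfl <;> linear_combination (-4) * h
  have hε₂' : -1 ≤ ε₂ ∧ ε₂ ≤ 1 := by omega
  refine ⟨u - 2 * X, ?_, ?_, by linear_combination -huv⟩
  · nlinarith
  · nlinarith

theorem pow_sq_add_sq_ne {y d e a k : ℕ} {ε₁ : ℤ} (hy : 2 < y) (he : 0 < e)
    (hε₁ : ε₁ = 1 ∨ ε₁ = -1) (ha : (a : ℤ) = 2 * y ^ e + ε₁) (hk : 0 < k) (hkd : k < y ^ d) :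
    (y ^ d) ^ 2 + k ^ 2 ≠ 2 * a * y ^ d * k + 4 := by
  intro h
  have hye : y ≤ y ^ e := Nat.le_self_pow he.ne' y
  have hya : y ≤ a := by zify at hye; rcases hε₁ with rfl | rfl <;> omega
  have ha_odd : Odd a := by
    rw [← Int.odd_coe_nat, ha]; rcases hε₁ with rfl | rfl <;> simp [parity_simps]
  have a1 : 1 < a := by omega
  obtain ⟨n, hQ, hkn⟩ := Pell.exists_eq_two_mul_yn_of_sq_add_sq_eq a1 hkd h
  have hn : 0 < n := Nat.pos_of_ne_zero (by rintro rfl; simp at hkn; omega)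
  obtain ⟨rfl, rfl⟩ :=
    Pell.eq_two_and_eq_one_of_pow_eq_two_mul_yn a1 ha_odd (by omega) hya hn hQ
  have h4a : y ^ 2 = 4 * a := by
    have := Pell.yn_succ_succ a1 0
    simp only [zero_add, Pell.yn_zero, Pell.yn_one, add_zero, mul_one] at this
    rw [hQ, this]
    ring
  have hy4 : (y : ℤ) ∣ 4 := by
    have h4 : (4 : ℤ) * ε₁ = y ^ 2 - 8 * y ^ e := by
      have : (y : ℤ) ^ 2 = 4 * a := by exact_mod_cast h4a
      linear_combination -this - 4 * ha
    have : (y : ℤ) ∣ 4 * ε₁ :=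
      h4 ▸ dvd_sub (dvd_pow_self _ two_ne_zero) (dvd_mul_of_dvd_right (dvd_pow_self _ he.ne') 8)
    rcases hε₁ with rfl | rfl <;> simpa using this
  have : y ≤ 4 := Nat.le_of_dvd (by norm_num) (by exact_mod_cast hy4)
  interval_cases y <;> [omega; exact (Nat.not_even_iff_odd.mpr ha_odd) ⟨2, by omega⟩]

theorem no_sq_eq_y_pow_pm_y_pow_pm_one_general
    (x y a b : ℕ) (hy : 2 < y) (hb : 0 < b)
    (hab : a > b) (haeven : Even a)
    (ε₁ ε₂ : ℤ) (hε₁ : ε₁ = 1 ∨ ε₁ = -1) (hε₂ : ε₂ = 1 ∨ ε₂ = -1) :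
    (x : ℤ) ^ 2 ≠ (y : ℤ) ^ a + ε₁ * (y : ℤ) ^ b + ε₂ := by
  obtain ⟨c, rfl⟩ := haeven
  have hY : (3 : ℤ) ≤ y := by exact_mod_cast hy
  intro h
  have hcb : c < b := by
    by_contra! hbc
    exact sq_ne_pow_add_pow_of_le hY hb hbc hε₁ hε₂ h
  obtain ⟨d, e, rfl, rfl, hd, he⟩ : ∃ d e, c = d + e ∧ b = 2 * d + e ∧ 0 < d ∧ 0 < e :=
    ⟨b - c, c + c - b, by omega, by omega, by omega, by omega⟩
  have hpow : ∀ {n : ℕ}, 0 < n → (3 : ℤ) ≤ y ^ n := fun hn =>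
    hY.trans (le_self_pow₀ (by linarith) hn.ne')
  obtain ⟨k, hk, hkQ, hQk⟩ := exists_sq_add_sq_eq_of_sq_eq hε₁ hε₂ (Int.natCast_nonneg x)
    (hpow hd) (hpow he) (by rw [h]; ring)
  lift k to ℕ using hk.le
  obtain ⟨l, hl⟩ : ∃ l : ℕ, (l : ℤ) = 2 * y ^ e + ε₁ :=
    ⟨_, Int.toNat_of_nonneg (by have := hpow he; omega)⟩
  rw [← hl] at hQk
  rcases hε₂ with rfl | rfl
  · exact pow_sq_add_sq_ne hy he hε₁ hl (by exact_mod_cast hk) (by exact_mod_cast hkQ)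
      (by exact_mod_cast hQk)
  · refine sq_add_sq_add_four_ne_mul (L := 2 * l) (A := y ^ d) ?_ (by positivity)
      (by exact_mod_cast hk) ?_
    · have := hpow he; omega
    · zify; linear_combination hQk

theorem no_sq_eq_y_pow_pm_y_pow_pm_one
    (x y a b : ℕ) (hx : 0 < x) (hy : 2 < y) (ha : 0 < a) (hb : 0 < b)
    (hab : a > b) (haeven : Even a)
    (hpow : ¬∃ m k : ℕ, 1 ≤ m ∧ 2 ≤ k ∧ y = m ^ k)
    (ε₁ ε₂ : ℤ) (hε₁ : ε₁ = 1 ∨ ε₁ = -1) (hε₂ : ε₂ = 1 ∨ ε₂ = -1) :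
    (x : ℤ) ^ 2 ≠ (y : ℤ) ^ a + ε₁ * (y : ℤ) ^ b + ε₂ :=
  no_sq_eq_y_pow_pm_y_pow_pm_one_general x y a b hy hb hab haeven ε₁ ε₂ hε₁ hε₂
end

section
/- Let D be a squarefree integer, u a positive integer, and p an odd prime. Say that a positive integer n is representable if there exist nonzero integers r and s with gcd(r, s·D) = 1 and u ∣ s such that r^2 − D·s^2 = p^n or r^2 − D·s^2 = −p^n. If t is the least representable positive integer and n is any representable positive integer, then t divides n. -/
private lemma rep_prim (D : ℤ) (p : ℕ) (hpz : Prime (p:ℤ)) (k : ℕ) (hk : 0 < k)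
    (r s e : ℤ) (hco : IsCoprime r (s * D))
    (h : r ^ 2 - D * s ^ 2 = e * (p:ℤ) ^ k) :
    ¬ (p:ℤ) ∣ r ∧ ¬ (p:ℤ) ∣ s ∧ ¬ (p:ℤ) ∣ D := by
  have hpk : (p:ℤ) ∣ (p:ℤ) ^ k := dvd_pow_self _ hk.ne'
  have hr : ¬ (p:ℤ) ∣ r := by
    intro hd
    have h1 : (p:ℤ) ∣ D * s ^ 2 := by
      have hE : D * s ^ 2 = r ^ 2 - e * (p:ℤ) ^ k := by linarith
      rw [hE]
      exact dvd_sub (dvd_pow hd two_ne_zero) (hpk.mul_left e)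
    have h2 : (p:ℤ) ∣ s * D := by
      rcases hpz.dvd_mul.mp h1 with h'|h'
      · exact h'.mul_left s
      · exact (hpz.dvd_of_dvd_pow h').mul_right D
    exact hpz.not_unit (hco.isUnit_of_dvd' hd h2)
  have hsD : ¬ (p:ℤ) ∣ s * D := by
    intro hd
    have h1 : (p:ℤ) ∣ r ^ 2 := by
      have hE : r ^ 2 = e * (p:ℤ) ^ k + D * s ^ 2 := by linarith
      rw [hE]
      refine dvd_add (hpk.mul_left e) ?_
      rcases hpz.dvd_mul.mp hd with h'|h'
      · exact (dvd_pow h' two_ne_zero).mul_left D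
      · exact h'.mul_right (s ^ 2)
    exact hr (hpz.dvd_of_dvd_pow h1)
  exact ⟨hr, fun h' => hsD (h'.mul_right D), fun h' => hsD (h'.mul_left s)⟩

private lemma descent_aux
    (D : ℤ) (p : ℕ) (hp : p.Prime) (hpodd : Odd p)
    (t n : ℕ) (ht : 0 < t) (htn : t < n)
    (r s x y e1 e2 : ℤ)
    (he1 : e1 = 1 ∨ e1 = -1) (he2 : e2 = 1 ∨ e2 = -1)
    (hco1 : IsCoprime r (s * D)) (hco2 : IsCoprime x (y * D))
    (h1 : r ^ 2 - D * s ^ 2 = e1 * (p:ℤ) ^ t)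
    (h2 : x ^ 2 - D * y ^ 2 = e2 * (p:ℤ) ^ n)
    (hdvdA : (p:ℤ) ∣ x * r - D * y * s) :
    ∃ r' s' : ℤ, r' ≠ 0 ∧ s' ≠ 0 ∧ IsCoprime r' (s' * D) ∧
      (p:ℤ) ^ t * s' = y * r - x * s ∧
      r' ^ 2 - D * s' ^ 2 = e1 * e2 * (p:ℤ) ^ (n - t) := by
  have hpz : Prime (p:ℤ) := Nat.prime_iff_prime_int.mp hp
  have hpt0 : ((p:ℤ) ^ t) ≠ 0 := pow_ne_zero _ (by exact_mod_cast hp.ne_zero)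
  have hp2 : ¬ (p:ℤ) ∣ 2 := by
    intro h
    have h' : p ∣ 2 := by exact_mod_cast h
    have := Nat.le_of_dvd (by norm_num) h'
    have h2le := hp.two_le
    interval_cases p
    · exact (Nat.not_odd_iff_even.mpr (by norm_num)) hpodd
  obtain ⟨hpr, hps, hpD⟩ := rep_prim D p hpz t ht r s e1 hco1 h1
  obtain ⟨hpx, hpy, -⟩ := rep_prim D p hpz n (ht.trans htn) x y e2 hco2 h2
  have hpnr : ¬ (p:ℤ) ∣ x * r := by
    intro h; rcases hpz.dvd_mul.mp h with h|h; exacts [hpx h, hpr h]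
  have hpyr : ¬ (p:ℤ) ∣ y * r := by
    intro h; rcases hpz.dvd_mul.mp h with h|h; exacts [hpy h, hpr h]
  -- p^t divides A := x*r - D*y*s
  have hptA : (p:ℤ) ^ t ∣ x * r - D * y * s := by
    have hprodeq : (x * r - D * y * s) * (x * r + D * y * s)
        = x ^ 2 * (e1 * (p:ℤ) ^ t) + D * s ^ 2 * (e2 * (p:ℤ) ^ n) := by
      linear_combination x ^ 2 * h1 + D * s ^ 2 * h2
    have hdvdprod : (p:ℤ) ^ t ∣ (x * r - D * y * s) * (x * r + D * y * s) := by
      rw [hprodeq]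
      exact dvd_add ((dvd_refl _).mul_left e1 |>.mul_left (x ^ 2))
        (((pow_dvd_pow (p:ℤ) htn.le).mul_left e2).mul_left (D * s ^ 2))
    have hnot : ¬ (p:ℤ) ∣ x * r + D * y * s := by
      intro h
      have hh := dvd_add hdvdA h
      have hE : (x * r - D * y * s) + (x * r + D * y * s) = 2 * (x * r) := by ring
      rw [hE] at hh
      rcases hpz.dvd_mul.mp hh with h'|h'
      · exact hp2 h'
      · exact hpnr h'
    exact (IsCoprime.pow_left (hpz.coprime_iff_not_dvd.2 hnot)).dvd_of_dvd_mul_right hdvdprod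
  have hpA : (p:ℤ) ∣ x * r - D * y * s := (dvd_pow_self _ ht.ne').trans hptA
  -- the big norm identity
  have hnormprod : (x * r - D * y * s) ^ 2 - D * (y * r - x * s) ^ 2
      = (e1 * e2) * (p:ℤ) ^ (n + t) := by
    linear_combination (r ^ 2 - D * s ^ 2) * h2 + (e2 * (p:ℤ) ^ n) * h1
  -- p^t divides B := y*r - x*s
  have hptB : (p:ℤ) ^ t ∣ y * r - x * s := by
    have hpB2 : (p:ℤ) ∣ D * (y * r - x * s) ^ 2 := by
      have hE : D * (y * r - x * s) ^ 2
          = (x * r - D * y * s) ^ 2 - (e1 * e2) * (p:ℤ) ^ (n + t) := by linarith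
      rw [hE]
      exact dvd_sub (dvd_pow hpA two_ne_zero)
        ((dvd_pow_self (p:ℤ) (by omega : n + t ≠ 0)).mul_left _)
    have hpB : (p:ℤ) ∣ y * r - x * s := by
      rcases hpz.dvd_mul.mp hpB2 with h'|h'
      · exact absurd h' hpD
      · exact hpz.dvd_of_dvd_pow h'
    have hprodeq : (y * r - x * s) * (y * r + x * s)
        = y ^ 2 * (e1 * (p:ℤ) ^ t) - s ^ 2 * (e2 * (p:ℤ) ^ n) := by
      linear_combination y ^ 2 * h1 - s ^ 2 * h2
    have hdvdprod : (p:ℤ) ^ t ∣ (y * r - x * s) * (y * r + x * s) := by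
      rw [hprodeq]
      exact dvd_sub ((dvd_refl _).mul_left e1 |>.mul_left (y ^ 2))
        (((pow_dvd_pow (p:ℤ) htn.le).mul_left e2).mul_left (s ^ 2))
    have hnot : ¬ (p:ℤ) ∣ y * r + x * s := by
      intro h
      have hh := dvd_add hpB h
      have hE : (y * r - x * s) + (y * r + x * s) = 2 * (y * r) := by ring
      rw [hE] at hh
      rcases hpz.dvd_mul.mp hh with h'|h'
      · exact hp2 h'
      · exact hpyr h'
    exact (IsCoprime.pow_left (hpz.coprime_iff_not_dvd.2 hnot)).dvd_of_dvd_mul_right hdvdprod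
  obtain ⟨r', hr'⟩ := hptA
  obtain ⟨s', hs'⟩ := hptB
  -- new norm equation
  have hnorm' : r' ^ 2 - D * s' ^ 2 = e1 * e2 * (p:ℤ) ^ (n - t) := by
    have key : ((p:ℤ) ^ t) ^ 2 * (r' ^ 2 - D * s' ^ 2)
        = ((p:ℤ) ^ t) ^ 2 * (e1 * e2 * (p:ℤ) ^ (n - t)) := by
      have expand : ((p:ℤ) ^ t) ^ 2 * (r' ^ 2 - D * s' ^ 2)
          = (x * r - D * y * s) ^ 2 - D * (y * r - x * s) ^ 2 := by
        rw [hr', hs']; ring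
      rw [expand, hnormprod, show n + t = (n - t) + 2 * t from by omega, pow_add]
      ring
    exact mul_left_cancel₀ (pow_ne_zero 2 hpt0) key
  -- recombination identities
  have hx' : r' * r + D * (s' * s) = e1 * x := by
    have key : (p:ℤ) ^ t * (r' * r + D * (s' * s)) = (p:ℤ) ^ t * (e1 * x) := by
      linear_combination x * h1 - r * hr' - (D * s) * hs'
    exact mul_left_cancel₀ hpt0 key
  have hy' : r' * s + s' * r = e1 * y := by
    have key : (p:ℤ) ^ t * (r' * s + s' * r) = (p:ℤ) ^ t * (e1 * y) := by
      linear_combination y * h1 - s * hr' - r * hs'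
    exact mul_left_cancel₀ hpt0 key
  have hpdvdnt : (p:ℤ) ∣ (p:ℤ) ^ (n - t) := dvd_pow_self _ (by omega : n - t ≠ 0)
  -- nonzero
  have hr'0 : r' ≠ 0 := by
    rintro rfl
    have hps' : (p:ℤ) ∣ s' := by
      have hDd : (p:ℤ) ∣ D * s' ^ 2 := by
        have hE : D * s' ^ 2 = -(e1 * e2 * (p:ℤ) ^ (n - t)) := by linarith [hnorm']
        rw [hE]
        exact (hpdvdnt.mul_left _).neg_right
      rcases hpz.dvd_mul.mp hDd with h'|h'
      · exact absurd h' hpD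
      · exact hpz.dvd_of_dvd_pow h'
    have hpxd : (p:ℤ) ∣ e1 * x := by
      rw [← hx']
      simpa using ((hps'.mul_right s).mul_left D)
    rcases he1 with rfl|rfl
    · simp only [one_mul] at hpxd; exact hpx hpxd
    · rw [neg_one_mul, dvd_neg] at hpxd; exact hpx hpxd
  have hs'0 : s' ≠ 0 := by
    rintro rfl
    have hpr' : (p:ℤ) ∣ r' := by
      have hE : r' ^ 2 = e1 * e2 * (p:ℤ) ^ (n - t) := by linarith [hnorm']
      exact hpz.dvd_of_dvd_pow (by rw [hE]; exact hpdvdnt.mul_left _)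
    have hpxd : (p:ℤ) ∣ e1 * x := by
      rw [← hx']
      simpa using (hpr'.mul_right r)
    rcases he1 with rfl|rfl
    · simp only [one_mul] at hpxd; exact hpx hpxd
    · rw [neg_one_mul, dvd_neg] at hpxd; exact hpx hpxd
  -- coprimality
  have hcrs : IsCoprime r' s' := by
    rw [Int.isCoprime_iff_gcd_eq_one]
    have hcxy : IsCoprime x y := hco2.of_isCoprime_of_dvd_right (dvd_mul_right y D)
    obtain ⟨a, b, hab⟩ := hcxy
    set g : ℕ := Int.gcd r' s' with hg
    have d1 : (g:ℤ) ∣ r' := Int.gcd_dvd_left r' s'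
    have d2 : (g:ℤ) ∣ s' := Int.gcd_dvd_right r' s'
    have hgx : (g:ℤ) ∣ x := by
      have h := dvd_add (d1.mul_right r) (((d2.mul_right s)).mul_left D)
      rw [hx'] at h
      rcases he1 with rfl|rfl
      · simpa using h
      · rw [neg_one_mul, dvd_neg] at h; exact h
    have hgy : (g:ℤ) ∣ y := by
      have h := dvd_add (d1.mul_right s) (d2.mul_right r)
      rw [hy'] at h
      rcases he1 with rfl|rfl
      · simpa using h
      · rw [neg_one_mul, dvd_neg] at h; exact h
    have hone : (g:ℤ) ∣ 1 := by
      rw [← hab]; exact dvd_add (hgx.mul_left a) (hgy.mul_left b)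
    exact_mod_cast Nat.dvd_one.mp (by exact_mod_cast hone)
  have hcrD : IsCoprime r' D := by
    rw [Int.isCoprime_iff_gcd_eq_one]
    set g : ℕ := Int.gcd r' D with hg
    have d1 : (g:ℤ) ∣ r' := Int.gcd_dvd_left r' D
    have d2 : (g:ℤ) ∣ D := Int.gcd_dvd_right r' D
    have hgp : (g:ℤ) ∣ (p:ℤ) ^ (n - t) := by
      have h := dvd_sub (dvd_pow d1 two_ne_zero) (d2.mul_right (s' ^ 2))
      rw [hnorm'] at h
      rcases he1 with rfl|rfl <;> rcases he2 with rfl|rfl <;>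
        first
          | simpa using h
          | (rw [show ((1:ℤ) * -1) = -1 from by norm_num, neg_one_mul, dvd_neg] at h; exact h)
          | (rw [show ((-1:ℤ) * 1) = -1 from by norm_num, neg_one_mul, dvd_neg] at h; exact h)
          | (rw [show ((-1:ℤ) * -1) = 1 from by norm_num, one_mul] at h; exact h)
    have hgpn : g ∣ p ^ (n - t) := by exact_mod_cast hgp
    obtain ⟨i, hi, hgi⟩ := (Nat.dvd_prime_pow hp).mp hgpn
    rcases Nat.eq_zero_or_pos i with rfl|hipos
    · simpa using hgi
    · exfalso
      have hpg : (p:ℤ) ∣ (g:ℤ) := by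
        exact_mod_cast hgi ▸ dvd_pow_self p hipos.ne'
      exact hpD (hpg.trans d2)
  exact ⟨r', s', hr'0, hs'0, hcrs.mul_right hcrD, hs'.symm, hnorm'⟩

theorem least_representable_norm_divides
    (D : ℤ) (hD : Squarefree D) (u : ℕ) (hu : 0 < u)
    (p : ℕ) (hp : p.Prime) (hpodd : Odd p)
    (Rep : ℕ → Prop)
    (hRep : ∀ n : ℕ, Rep n ↔ ∃ r s : ℤ, r ≠ 0 ∧ s ≠ 0 ∧ IsCoprime r (s * D) ∧
      (u : ℤ) ∣ s ∧ (r ^ 2 - D * s ^ 2 = (p : ℤ) ^ n ∨ r ^ 2 - D * s ^ 2 = -(p : ℤ) ^ n))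
    (t : ℕ) (ht : 0 < t) (htRep : Rep t)
    (htleast : ∀ m : ℕ, 0 < m → Rep m → t ≤ m)
    (n : ℕ) (hn : 0 < n) (hnRep : Rep n) :
    t ∣ n := by
  have hpz : Prime (p:ℤ) := Nat.prime_iff_prime_int.mp hp
  -- p does not divide u
  have hpu : ¬ p ∣ u := by
    obtain ⟨r, s, hr, hs, hco, hus, hd⟩ := (hRep t).mp htRep
    obtain ⟨e, he, h1⟩ : ∃ e : ℤ, (e = 1 ∨ e = -1) ∧ r ^ 2 - D * s ^ 2 = e * (p:ℤ) ^ t := by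
      rcases hd with h|h
      · exact ⟨1, Or.inl rfl, by linarith⟩
      · exact ⟨-1, Or.inr rfl, by linarith⟩
    obtain ⟨-, hps, -⟩ := rep_prim D p hpz t ht r s e hco h1
    intro hdu
    exact hps (((Int.natCast_dvd_natCast.mpr hdu)).trans hus)
  suffices key : ∀ N : ℕ, 0 < N → Rep N → t ∣ N from key n hn hnRep
  intro N
  induction N using Nat.strong_induction_on with
  | _ N ih =>
    intro hN hNRep
    have hle := htleast N hN hNRep
    rcases eq_or_lt_of_le hle with heq|hlt
    · exact heq ▸ dvd_refl t
    · obtain ⟨r, s, hr, hs, hco1, hus, hd1⟩ := (hRep t).mp htRep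
      obtain ⟨x, y, hx0, hy0, hco2, huy, hd2⟩ := (hRep N).mp hNRep
      obtain ⟨e1, he1, h1⟩ : ∃ e : ℤ, (e = 1 ∨ e = -1) ∧ r ^ 2 - D * s ^ 2 = e * (p:ℤ) ^ t := by
        rcases hd1 with h|h
        · exact ⟨1, Or.inl rfl, by linarith⟩
        · exact ⟨-1, Or.inr rfl, by linarith⟩
      obtain ⟨e2, he2, h2⟩ : ∃ e : ℤ, (e = 1 ∨ e = -1) ∧ x ^ 2 - D * y ^ 2 = e * (p:ℤ) ^ N := by
        rcases hd2 with h|h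
        · exact ⟨1, Or.inl rfl, by linarith⟩
        · exact ⟨-1, Or.inr rfl, by linarith⟩
      -- sign selection
      have hprod : (p:ℤ) ∣ (x * r - D * y * s) * (x * r + D * y * s) := by
        have hprodeq : (x * r - D * y * s) * (x * r + D * y * s)
            = x ^ 2 * (e1 * (p:ℤ) ^ t) + D * s ^ 2 * (e2 * (p:ℤ) ^ N) := by
          linear_combination x ^ 2 * h1 + D * s ^ 2 * h2
        rw [hprodeq]
        exact dvd_add (((dvd_pow_self (p:ℤ) ht.ne').mul_left e1).mul_left (x ^ 2))
          (((dvd_pow_self (p:ℤ) hN.ne').mul_left e2).mul_left (D * s ^ 2))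
      have hdescent : ∃ r' s' : ℤ, r' ≠ 0 ∧ s' ≠ 0 ∧ IsCoprime r' (s' * D) ∧
          (u:ℤ) ∣ s' ∧ r' ^ 2 - D * s' ^ 2 = e1 * e2 * (p:ℤ) ^ (N - t) := by
        have huB : ∀ s'' : ℤ, (u:ℤ) ∣ s'' → ((p:ℤ) ^ t * s'' = y * r - x * s ∨
            (p:ℤ) ^ t * s'' = y * r + x * s) → True := fun _ _ _ => trivial
        rcases hpz.dvd_mul.mp hprod with hA|hA
        · obtain ⟨r', s', hr'0, hs'0, hco', hsB, hnorm'⟩ :=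
            descent_aux D p hp hpodd t N ht hlt r s x y e1 e2 he1 he2 hco1 hco2 h1 h2 hA
          refine ⟨r', s', hr'0, hs'0, hco', ?_, hnorm'⟩
          have hud : (u:ℤ) ∣ y * r - x * s :=
            dvd_sub (huy.mul_right r) (hus.mul_left x)
          have hcop : IsCoprime ((u:ℤ)) ((p:ℤ) ^ t) :=
            (IsCoprime.pow_left (hpz.coprime_iff_not_dvd.2
              (fun h => hpu (Int.natCast_dvd_natCast.mp h)))).symm
          exact hcop.dvd_of_dvd_mul_left (by rw [hsB]; exact hud)
        · have hco1' : IsCoprime r (-s * D) := by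
            rw [show -s * D = -(s * D) from by ring]; exact hco1.neg_right
          have h1' : r ^ 2 - D * (-s) ^ 2 = e1 * (p:ℤ) ^ t := by linear_combination h1
          have hA' : (p:ℤ) ∣ x * r - D * y * (-s) := by
            rw [show x * r - D * y * (-s) = x * r + D * y * s from by ring]; exact hA
          obtain ⟨r', s', hr'0, hs'0, hco', hsB, hnorm'⟩ :=
            descent_aux D p hp hpodd t N ht hlt r (-s) x y e1 e2 he1 he2 hco1' hco2 h1' h2 hA'
          refine ⟨r', s', hr'0, hs'0, hco', ?_, hnorm'⟩
          have hud : (u:ℤ) ∣ y * r - x * (-s) := by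
            rw [show y * r - x * (-s) = y * r + x * s from by ring]
            exact dvd_add (huy.mul_right r) (hus.mul_left x)
          have hcop : IsCoprime ((u:ℤ)) ((p:ℤ) ^ t) :=
            (IsCoprime.pow_left (hpz.coprime_iff_not_dvd.2
              (fun h => hpu (Int.natCast_dvd_natCast.mp h)))).symm
          exact hcop.dvd_of_dvd_mul_left (by rw [hsB]; exact hud)
      obtain ⟨r', s', hr'0, hs'0, hco', hus', hnorm'⟩ := hdescent
      have hRepNt : Rep (N - t) := by
        rw [hRep]
        refine ⟨r', s', hr'0, hs'0, hco', hus', ?_⟩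
        rcases he1 with rfl|rfl <;> rcases he2 with rfl|rfl
        · left; linarith [hnorm']
        · right; linarith [hnorm']
        · right; linarith [hnorm']
        · left; linarith [hnorm']
      have hdvd := ih (N - t) (by omega) (by omega) hRepNt
      have : t ∣ (N - t) + t := dvd_add hdvd dvd_rfl
      rwa [Nat.sub_add_cancel hle] at this
end

section
/- Let D be a positive integer with D ≡ 2 (mod 4). If r > 1 is an integer and a is an integer such that, in the ring ℤ[√−D], (1 + √−D)^r = a + √−D or (1 + √−D)^r = a − √−D, then D = 2 and r = 3. -/
private lemma sq1mod3 (y : ℤ) (h : ¬ (3:ℤ) ∣ y) : (3:ℤ) ∣ y^2 - 1 := by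
  have h0 : y % 3 = 1 ∨ y % 3 = 2 := by omega
  obtain h1 | h1 := h0
  · obtain ⟨k, hk⟩ : ∃ k, y = 3*k + 1 := ⟨y/3, by omega⟩
    exact ⟨3*k^2 + 2*k, by rw [hk]; ring⟩
  · obtain ⟨k, hk⟩ : ∃ k, y = 3*k + 2 := ⟨y/3, by omega⟩
    exact ⟨3*k^2 + 4*k + 1, by rw [hk]; ring⟩

private lemma cube_re (D x y : ℤ) : ((⟨x,y⟩ : ℤ√(-D))^3).re = x^3 - 3*D*x*y^2 := by
  have h3 : (⟨x,y⟩ : ℤ√(-D))^3 = ⟨x,y⟩*⟨x,y⟩*⟨x,y⟩ := by ring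
  rw [h3]; simp [Zsqrtd.re_mul, Zsqrtd.im_mul]; ring

private lemma cube_im (D x y : ℤ) : ((⟨x,y⟩ : ℤ√(-D))^3).im = 3*x^2*y - D*y^3 := by
  have h3 : (⟨x,y⟩ : ℤ√(-D))^3 = ⟨x,y⟩*⟨x,y⟩*⟨x,y⟩ := by ring
  rw [h3]; simp [Zsqrtd.re_mul, Zsqrtd.im_mul]; ring

private lemma step_re (D : ℤ) (z : ℤ√(-D)) : (z * ⟨1,1⟩).re = z.re - D * z.im := by
  simp [Zsqrtd.re_mul]; ring

private lemma step_im (D : ℤ) (z : ℤ√(-D)) : (z * ⟨1,1⟩).im = z.re + z.im := by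
  simp [Zsqrtd.im_mul]

private lemma orbit (D q : ℤ) (hq : q ∣ D) : ∀ n : ℕ,
    q ∣ ((⟨1,1⟩ : ℤ√(-D))^n).re - 1 ∧ q ∣ ((⟨1,1⟩ : ℤ√(-D))^n).im - n := by
  intro n
  induction n with
  | zero => simp
  | succ n ih =>
    obtain ⟨h1, h2⟩ := ih
    rw [pow_succ]
    constructor
    · rw [step_re]
      have h3 := dvd_sub h1 (hq.mul_right ((⟨1,1⟩ : ℤ√(-D))^n).im)
      convert h3 using 1; rfl; ring
    · rw [step_im]
      have h3 := dvd_add h1 h2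
      convert h3 using 1; rfl; push_cast; ring

private lemma pow_coords (P Dq y₀ : ℤ) (w e : ℕ) (x y : ℤ)
    (hy : y = P^w * y₀) :
    ∀ j : ℕ, ∃ s t : ℤ,
      ((⟨x, y⟩ : ℤ√(-(P^e * Dq)))^(j+3)).re
        = x^(j+3) - ((j+3).choose 2 : ℤ) * x^(j+1) * y^2 * (P^e * Dq) + P^(2*w+2*e) * s ∧
      ((⟨x, y⟩ : ℤ√(-(P^e * Dq)))^(j+3)).im
        = ((j:ℤ)+3) * x^(j+2) * y - ((j+3).choose 3 : ℤ) * x^j * y^3 * (P^e * Dq) + P^(3*w+2*e) * t := by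
  intro j
  induction j with
  | zero =>
    refine ⟨0, 0, ?_, ?_⟩
    · rw [show (0+3 : ℕ) = 3 from rfl, cube_re]
      norm_num; ring
    · rw [show (0+3 : ℕ) = 3 from rfl, cube_im]
      norm_num; ring
  | succ j ih =>
    obtain ⟨s, t, hre, him⟩ := ih
    have hc2 : ((j+1+3).choose 2 : ℤ) = ((j:ℤ)+3) + ((j+3).choose 2 : ℤ) := by
      rw [show j+1+3 = (j+3)+1 from rfl, Nat.choose_succ_succ (j+3) 1, Nat.choose_one_right]
      push_cast; ring
    have hc3 : ((j+1+3).choose 3 : ℤ) = ((j+3).choose 2 : ℤ) + ((j+3).choose 3 : ℤ) := by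
      rw [show j+1+3 = (j+3)+1 from rfl, Nat.choose_succ_succ (j+3) 2]
      push_cast; ring
    have hp : (⟨x, y⟩ : ℤ√(-(P^e * Dq)))^(j+1+3) = (⟨x, y⟩ : ℤ√(-(P^e * Dq)))^(j+3) * ⟨x,y⟩ := by
      rw [show j+1+3 = (j+3)+1 from rfl, pow_succ]
    refine ⟨s*x + P^(2*w)*((j+3).choose 3 : ℤ)*x^j*y₀^4*Dq^2 - P^(2*w+e)*Dq*y₀*t,
            s*y₀ + t*x, ?_, ?_⟩
    · rw [hp, Zsqrtd.re_mul, hre, him, hc2, hy]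
      push_cast; ring
    · rw [hp, Zsqrtd.im_mul, hre, him, hc3, hy]
      push_cast; ring

private lemma VL (D : ℤ) (p e : ℕ) (Dq : ℤ) (hp : p.Prime) (hp2 : p ≠ 2) (he : 1 ≤ e)
    (hD : D = (p:ℤ)^e * Dq)
    (hcond : 5 ≤ p ∨ 2 ≤ e ∨ (p = 3 ∧ e = 1 ∧ Dq % 3 = 2)) :
    ∀ n : ℕ, 0 < n → ∃ (w : ℕ) (y₀ x₁ : ℤ),
      ¬ (p:ℤ) ∣ y₀ ∧
      ((⟨1,1⟩ : ℤ√(-D))^n).im = (p:ℤ)^w * y₀ ∧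
      ((⟨1,1⟩ : ℤ√(-D))^n).re = 1 + (p:ℤ)^(w+e) * x₁ := by
  subst hD
  set P : ℤ := (p:ℤ) with hP
  have hPprime : Prime P := Nat.prime_iff_prime_int.mp hp
  obtain ⟨e', rfl⟩ : ∃ e', e = e'+1 := ⟨e-1, by omega⟩
  intro n
  induction n using Nat.strong_induction_on with
  | _ n IH =>
    intro hn
    by_cases hpn : p ∣ n
    · obtain ⟨n', rfl⟩ := hpn
      have hn' : 0 < n' := by
        rcases Nat.eq_zero_or_pos n' with h | h
        · subst h; simp at hn
        · exact h
      have hlt : n' < p * n' := by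
        have h2 := hp.two_le
        have := Nat.mul_le_mul_right n' h2
        omega
      obtain ⟨w, y₀, x₁, hy₀, him, hre⟩ := IH n' hlt hn'
      obtain ⟨x, y, hxy⟩ : ∃ a b, (⟨1,1⟩ : ℤ√(-(P^(e'+1) * Dq)))^n' = (⟨a, b⟩ : ℤ√(-(P^(e'+1) * Dq))) :=
        ⟨_, _, rfl⟩
      rw [hxy] at him hre
      have hy : y = P^w * y₀ := him
      have hx : x = 1 + P^(w+(e'+1)) * x₁ := hre
      have hpdx : ¬ P ∣ x := by
        intro hdvd
        have h1 : P ∣ P^(w+(e'+1)) * x₁ :=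
          dvd_mul_of_dvd_left (dvd_pow_self _ (by omega)) _
        have h2 : x - P^(w+(e'+1)) * x₁ = 1 := by rw [hx]; ring
        exact hPprime.not_dvd_one (h2 ▸ dvd_sub hdvd h1)
      have hpow : (⟨1,1⟩ : ℤ√(-(P^(e'+1) * Dq)))^(p*n')
          = ((⟨x,y⟩ : ℤ√(-(P^(e'+1) * Dq))))^p := by
        rw [mul_comm p n', pow_mul, hxy]
      have hdx1 : P^(w+(e'+1)) ∣ x - 1 := ⟨x₁, by rw [hx]; ring⟩
      have hpx1 : P ∣ x - 1 := dvd_trans (dvd_pow_self _ (by omega)) hdx1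
      by_cases hp3 : p = 3
      · -- p = 3 : use exact cube formulas
        have hP3 : P = 3 := by rw [hP, hp3]; norm_num
        have him3 : ((⟨1,1⟩ : ℤ√(-(P^(e'+1) * Dq)))^(p*n')).im
            = P^(w+1) * (x^2*y₀ - P^(e'+2*w)*Dq*y₀^3) := by
          rw [hpow, hp3, cube_im, hy, hP3]
          ring
        have hY : ¬ P ∣ (x^2*y₀ - P^(e'+2*w)*Dq*y₀^3) := by
          by_cases hzero : e' + 2*w = 0
          · have hDq2 : Dq % 3 = 2 := by
              rcases hcond with h | h | h
              · omega
              · omega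
              · exact h.2.2
            intro hdvd
            rw [hzero, pow_zero, one_mul] at hdvd
            have hfac : x^2*y₀ - Dq*y₀^3 = y₀ * (x^2 - Dq*y₀^2) := by ring
            rw [hfac] at hdvd
            rcases hPprime.dvd_mul.mp hdvd with h | h
            · exact hy₀ h
            · have hx2 : (3:ℤ) ∣ x^2 - 1 := by
                have he : x^2 - 1 = (x-1)*(x+1) := by ring
                rw [he]
                exact dvd_mul_of_dvd_left (hP3 ▸ hpx1) _
              have hy2 : (3:ℤ) ∣ y₀^2 - 1 := sq1mod3 y₀ (hP3 ▸ hy₀)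
              have hDq3 : (3:ℤ) ∣ Dq - 2 := by omega
              have hPh : (3:ℤ) ∣ x^2 - Dq*y₀^2 := hP3 ▸ h
              have hfinal : (3:ℤ) ∣ (-1:ℤ) := by
                have hd := dvd_sub (dvd_sub (dvd_sub hPh hx2) (Dvd.dvd.mul_left hDq3 (-(y₀^2)))) (Dvd.dvd.mul_left hy2 (-2))
                convert hd using 1; rfl; ring
              norm_num at hfinal
          · intro hdvd
            have h1 : P ∣ P^(e'+2*w)*Dq*y₀^3 :=
              dvd_mul_of_dvd_left (dvd_mul_of_dvd_left (dvd_pow_self _ hzero) _) _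
            have h2 : P ∣ x^2*y₀ := by
              have hd := dvd_add hdvd h1
              convert hd using 1; rfl; ring
            rcases hPprime.dvd_mul.mp h2 with h | h
            · exact hpdx (hPprime.dvd_of_dvd_pow h)
            · exact hy₀ h
        have hdvdre : P^((w+1)+(e'+1)) ∣ ((⟨1,1⟩ : ℤ√(-(P^(e'+1) * Dq)))^(p*n')).re - 1 := by
          rw [hpow, hp3, cube_re]
          have ha : P^(w+(e'+1)) * P ∣ (x-1)*(x^2+x+1) := by
            apply mul_dvd_mul hdx1
            have he : x^2+x+1 = (x-1)*(x+2) + 3 := by ring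
            rw [he]
            exact dvd_add (dvd_mul_of_dvd_left hpx1 _) ⟨1, by rw [hP3]; ring⟩
          have ha' : P^((w+1)+(e'+1)) ∣ x^3 - 1 := by
            have h1 : x^3 - 1 = (x-1)*(x^2+x+1) := by ring
            have h2 : P^((w+1)+(e'+1)) = P^(w+(e'+1)) * P := by ring
            rw [h1, h2]; exact ha
          have hb : P^((w+1)+(e'+1)) ∣ 3*(P^(e'+1)*Dq)*x*y^2 := by
            refine ⟨Dq*x*y₀^2*P^w, ?_⟩
            rw [hy, show (3:ℤ) = P from hP3.symm]; ring
          have hgoal : x ^ 3 - 3 * (P^(e'+1) * Dq) * x * y ^ 2 - 1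
              = (x^3 - 1) - 3*(P^(e'+1)*Dq)*x*y^2 := by ring
          rw [hgoal]
          exact dvd_sub ha' hb
        obtain ⟨x₁', hx₁'⟩ := hdvdre
        exact ⟨w+1, _, x₁', hY, him3, by linarith⟩
      · -- p ≥ 5
        have hp5 : 5 ≤ p := by
          have h2 := hp.two_le
          have h4 : p ≠ 4 := by rintro rfl; norm_num at hp
          omega
        obtain ⟨j, hj⟩ : ∃ j, p = j + 3 := ⟨p - 3, by omega⟩
        obtain ⟨s, t, hre3, him3⟩ := pow_coords P Dq y₀ w (e'+1) x y hy j
        obtain ⟨c2, hc2⟩ := (Nat.Prime.dvd_choose_self hp (by norm_num) (by omega) : p ∣ p.choose 2)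
        obtain ⟨c3, hc3⟩ := (Nat.Prime.dvd_choose_self hp (by norm_num) (by omega) : p ∣ p.choose 3)
        have hc2' : ((j+3).choose 2 : ℤ) = P * (c2:ℤ) := by
          rw [← hj, hc2]; push_cast; ring
        have hc3' : ((j+3).choose 3 : ℤ) = P * (c3:ℤ) := by
          rw [← hj, hc3]; push_cast; ring
        have hjp : ((j:ℤ)+3) = P := by rw [hP, hj]; push_cast; ring
        -- imaginary part
        have him' : ((⟨1,1⟩ : ℤ√(-(P^(e'+1) * Dq)))^(p*n')).im
            = P^(w+1) * (x^(j+2)*y₀ - P^(2*w+e'+1)*(c3:ℤ)*x^j*y₀^3*Dq + P^(2*w+2*e'+1)*t) := by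
          rw [hpow, hj, him3, hc3', hjp, hy]
          ring
        have hY : ¬ P ∣ (x^(j+2)*y₀ - P^(2*w+e'+1)*(c3:ℤ)*x^j*y₀^3*Dq + P^(2*w+2*e'+1)*t) := by
          intro hdvd
          have h1 : P ∣ P^(2*w+e'+1)*(c3:ℤ)*x^j*y₀^3*Dq - P^(2*w+2*e'+1)*t := by
            refine dvd_sub ?_ ?_
            · exact dvd_mul_of_dvd_left (dvd_mul_of_dvd_left (dvd_mul_of_dvd_left (dvd_mul_of_dvd_left (dvd_pow_self _ (by omega)) _) _) _) _
            · exact dvd_mul_of_dvd_left (dvd_pow_self _ (by omega)) _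
          have h2 : P ∣ x^(j+2)*y₀ := by
            have hd := dvd_add hdvd h1
            convert hd using 1; rfl; ring
          rcases hPprime.dvd_mul.mp h2 with h | h
          · exact hpdx (hPprime.dvd_of_dvd_pow h)
          · exact hy₀ h
        -- real part
        have hdvdre : P^((w+1)+(e'+1)) ∣ ((⟨1,1⟩ : ℤ√(-(P^(e'+1) * Dq)))^(p*n')).re - 1 := by
          rw [hpow, hj, hre3]
          have ha : P^((w+1)+(e'+1)) ∣ x^(j+3) - 1 := by
            have hgs : (∑ i ∈ Finset.range p, x^i) * (x - 1) = x^p - 1 := geom_sum_mul x p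
            have hsum : P ∣ (∑ i ∈ Finset.range p, x^i) := by
              have h1 : P ∣ (∑ i ∈ Finset.range p, x^i) - p := by
                have h2 : (∑ i ∈ Finset.range p, x^i) - p = ∑ i ∈ Finset.range p, (x^i - 1) := by
                  rw [Finset.sum_sub_distrib]
                  simp
                rw [h2]
                refine Finset.dvd_sum ?_
                intro i _
                have h3 : x - 1 ∣ x^i - 1 := by
                  simpa using sub_dvd_pow_sub_pow x 1 i
                exact dvd_trans hpx1 h3
              have h3 : (∑ i ∈ Finset.range p, x^i) = ((∑ i ∈ Finset.range p, x^i) - p) + p := by ring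
              rw [h3]
              exact dvd_add h1 ⟨1, by ring⟩
            have hmul : P^(w+(e'+1)) * P ∣ (x - 1) * (∑ i ∈ Finset.range p, x^i) :=
              mul_dvd_mul hdx1 hsum
            have heq : x^(j+3) - 1 = (x - 1) * (∑ i ∈ Finset.range p, x^i) := by
              rw [← hj, ← hgs]; ring
            have h2 : P^((w+1)+(e'+1)) = P^(w+(e'+1)) * P := by ring
            rw [heq, h2]
            exact hmul
          have hb : P^((w+1)+(e'+1)) ∣ ((j+3).choose 2 : ℤ) * x^(j+1) * y^2 * (P^(e'+1)*Dq) := by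
            refine ⟨(c2:ℤ)*x^(j+1)*y₀^2*Dq*P^w, ?_⟩
            rw [hy, hc2']; ring
          have hc : P^((w+1)+(e'+1)) ∣ P^(2*w+2*(e'+1)) * s := by
            refine ⟨P^(w+e')*s, ?_⟩; ring
          have hgoal : x^(j+3) - ((j+3).choose 2 : ℤ) * x^(j+1) * y^2 * (P^(e'+1)*Dq) + P^(2*w+2*(e'+1)) * s - 1
              = (x^(j+3) - 1) - ((j+3).choose 2 : ℤ) * x^(j+1) * y^2 * (P^(e'+1)*Dq) + P^(2*w+2*(e'+1)) * s := by
            ring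
          rw [hgoal]
          exact dvd_add (dvd_sub ha hb) hc
        obtain ⟨x₁', hx₁'⟩ := hdvdre
        exact ⟨w+1, _, x₁', hY, him', by linarith⟩
    · -- base case : p ∤ n
      obtain ⟨h1, h2⟩ := orbit (P^(e'+1) * Dq) (P^(e'+1)) (Dvd.intro _ rfl) n
      obtain ⟨c, hc⟩ := h1
      refine ⟨0, ((⟨1,1⟩ : ℤ√(-(P^(e'+1) * Dq)))^n).im, c, ?_, by ring, by simp only [Nat.zero_add]; linarith⟩
      intro hdvd
      have h3 : P ∣ (n:ℤ) := by
        have h4 : P ∣ P^(e'+1) := dvd_pow_self _ (by omega)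
        have hd := dvd_sub hdvd (dvd_trans h4 h2)
        convert hd using 1; rfl; ring
      exact hpn (Int.natCast_dvd_natCast.mp h3)

private lemma mod4_seq (D : ℤ) (hD : D % 4 = 2) (X Y : ℕ → ℤ)
    (h0 : X 0 = 1) (h0' : Y 0 = 0)
    (hstep : ∀ n, X (n+1) = X n - D * Y n ∧ Y (n+1) = X n + Y n) : ∀ n,
    (n % 4 = 0 ∧ X n % 4 = 1 ∧ Y n % 4 = 0) ∨
    (n % 4 = 1 ∧ X n % 4 = 1 ∧ Y n % 4 = 1) ∨
    (n % 4 = 2 ∧ X n % 4 = 3 ∧ Y n % 4 = 2) ∨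
    (n % 4 = 3 ∧ X n % 4 = 3 ∧ Y n % 4 = 1) := by
  intro n
  induction n with
  | zero => left; norm_num [h0, h0']
  | succ n ih =>
    obtain ⟨hre, him⟩ := hstep n
    have hmul : (D * Y n) % 4 = (2 * (Y n % 4)) % 4 := by
      rw [Int.mul_emod, hD]
    rcases ih with ⟨h4,h5,h6⟩|⟨h4,h5,h6⟩|⟨h4,h5,h6⟩|⟨h4,h5,h6⟩ <;> rw [h6] at hmul <;>
      norm_num at hmul <;> omega

private lemma mod4 (D : ℤ) (hD : D % 4 = 2) (n : ℕ) :
    (n % 4 = 0 ∧ ((⟨1,1⟩ : ℤ√(-D))^n).re % 4 = 1 ∧ ((⟨1,1⟩ : ℤ√(-D))^n).im % 4 = 0) ∨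
    (n % 4 = 1 ∧ ((⟨1,1⟩ : ℤ√(-D))^n).re % 4 = 1 ∧ ((⟨1,1⟩ : ℤ√(-D))^n).im % 4 = 1) ∨
    (n % 4 = 2 ∧ ((⟨1,1⟩ : ℤ√(-D))^n).re % 4 = 3 ∧ ((⟨1,1⟩ : ℤ√(-D))^n).im % 4 = 2) ∨
    (n % 4 = 3 ∧ ((⟨1,1⟩ : ℤ√(-D))^n).re % 4 = 3 ∧ ((⟨1,1⟩ : ℤ√(-D))^n).im % 4 = 1) := by
  refine mod4_seq D hD (fun k => ((⟨1,1⟩ : ℤ√(-D))^k).re) (fun k => ((⟨1,1⟩ : ℤ√(-D))^k).im)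
    (by norm_num) (by norm_num) (fun k => ?_) n
  constructor
  · show ((⟨1,1⟩ : ℤ√(-D))^(k+1)).re = ((⟨1,1⟩ : ℤ√(-D))^k).re - D * ((⟨1,1⟩ : ℤ√(-D))^k).im
    rw [pow_succ, step_re]
  · show ((⟨1,1⟩ : ℤ√(-D))^(k+1)).im = ((⟨1,1⟩ : ℤ√(-D))^k).re + ((⟨1,1⟩ : ℤ√(-D))^k).im
    rw [pow_succ, step_im]

private lemma zsq_ext (D : ℤ) (z w : ℤ√(-D)) (h1 : z.re = w.re) (h2 : z.im = w.im) : z = w := by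
  cases z; cases w; simp_all

private lemma pow4 : (⟨1,1⟩ : ℤ√(-2))^4 = ⟨-7,-4⟩ := by
  have h : (⟨1,1⟩ : ℤ√(-2))^4 = ⟨1,1⟩*⟨1,1⟩*⟨1,1⟩*⟨1,1⟩ := by ring
  rw [h]
  apply zsq_ext <;> simp [Zsqrtd.re_mul, Zsqrtd.im_mul] <;> norm_num

private lemma pow3 : (⟨1,1⟩ : ℤ√(-2))^3 = ⟨-5,1⟩ := by
  have h : (⟨1,1⟩ : ℤ√(-2))^3 = ⟨1,1⟩*⟨1,1⟩*⟨1,1⟩ := by ring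
  rw [h]
  apply zsq_ext <;> simp [Zsqrtd.re_mul, Zsqrtd.im_mul] <;> norm_num

private lemma betasq : (⟨-7,-4⟩ : ℤ√(-2))^2 = ⟨17,56⟩ := by
  have h : (⟨-7,-4⟩ : ℤ√(-2))^2 = ⟨-7,-4⟩*⟨-7,-4⟩ := by ring
  rw [h]
  apply zsq_ext <;> simp [Zsqrtd.re_mul, Zsqrtd.im_mul] <;> norm_num

-- odd powers of beta
private lemma L2odd : ∀ k : ℕ, ∃ y₀ x₀ : ℤ, y₀ % 2 = 1 ∧ x₀ % 2 = 1 ∧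
    ((⟨-7,-4⟩ : ℤ√(-2))^(2*k+1)).im = 4 * y₀ ∧
    ((⟨-7,-4⟩ : ℤ√(-2))^(2*k+1)).re = 1 + 8 * x₀ := by
  intro k
  induction k with
  | zero => exact ⟨-1, -1, by norm_num, by norm_num, by norm_num, by norm_num⟩
  | succ k ih =>
    obtain ⟨y₀, x₀, hy, hx, him, hre⟩ := ih
    have hpow : (⟨-7,-4⟩ : ℤ√(-2))^(2*(k+1)+1) = (⟨-7,-4⟩ : ℤ√(-2))^(2*k+1) * ⟨17,56⟩ := by
      rw [← betasq, ← pow_add]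
      ring_nf
    refine ⟨14 + 112*x₀ + 17*y₀, 17*x₀ - 56*y₀ + 2, by omega, by omega, ?_, ?_⟩
    · rw [hpow, Zsqrtd.im_mul]
      have h1 : ((⟨17,56⟩ : ℤ√(-2))).im = 56 := rfl
      have h2 : ((⟨17,56⟩ : ℤ√(-2))).re = 17 := rfl
      rw [h1, h2, him, hre]; ring
    · rw [hpow, Zsqrtd.re_mul]
      have h1 : ((⟨17,56⟩ : ℤ√(-2))).im = 56 := rfl
      have h2 : ((⟨17,56⟩ : ℤ√(-2))).re = 17 := rfl
      rw [h1, h2, him, hre]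
      ring

private lemma L2 : ∀ g : ℕ, 0 < g → ∃ (w : ℕ) (y₀ x₀ : ℤ), y₀ % 2 = 1 ∧ x₀ % 2 = 1 ∧
    ((⟨-7,-4⟩ : ℤ√(-2))^g).im = 2^(w+2) * y₀ ∧
    ((⟨-7,-4⟩ : ℤ√(-2))^g).re = 1 + 2^(w+3) * x₀ := by
  intro g
  induction g using Nat.strong_induction_on with
  | _ g IH =>
    intro hg
    rcases Nat.even_or_odd g with he | ho
    · obtain ⟨g', rfl⟩ : ∃ g', g = 2*g' := by
        obtain ⟨c, hc⟩ := he; exact ⟨c, by omega⟩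
      have hg' : 0 < g' := by omega
      obtain ⟨w, y₀, x₀, hy, hx, him, hre⟩ := IH g' (by omega) hg'
      have hpow : (⟨-7,-4⟩ : ℤ√(-2))^(2*g') = ((⟨-7,-4⟩ : ℤ√(-2))^g') * ((⟨-7,-4⟩ : ℤ√(-2))^g') := by
        rw [two_mul, pow_add]
      have h2e : (2:ℤ) ∣ 2^(w+1) := dvd_pow_self _ (by omega)
      refine ⟨w+1, (1 + 2^(w+3)*x₀) * y₀, x₀ + 2^(w+2)*x₀^2 - 2^(w+1)*y₀^2, ?_, ?_, ?_, ?_⟩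
      · have ha : (2:ℤ) ∣ 2^(w+3)*x₀ := dvd_mul_of_dvd_left (dvd_pow_self _ (by omega)) _
        rw [Int.mul_emod]
        obtain ⟨c, hc⟩ := ha
        have : (1 + 2^(w+3)*x₀) % 2 = 1 := by omega
        rw [this, hy]
        norm_num
      · have ha : (2:ℤ) ∣ 2^(w+2)*x₀^2 := dvd_mul_of_dvd_left (dvd_pow_self _ (by omega)) _
        have hb : (2:ℤ) ∣ 2^(w+1)*y₀^2 := dvd_mul_of_dvd_left (dvd_pow_self _ (by omega)) _
        obtain ⟨c, hc⟩ := ha; obtain ⟨c', hc'⟩ := hb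
        omega
      · rw [hpow, Zsqrtd.im_mul, him, hre]; ring
      · rw [hpow, Zsqrtd.re_mul, him, hre]; ring
    · obtain ⟨k, rfl⟩ : ∃ k, g = 2*k+1 := by
        obtain ⟨c, hc⟩ := ho; exact ⟨c, by omega⟩
      obtain ⟨y₀, x₀, hy, hx, him, hre⟩ := L2odd k
      exact ⟨0, y₀, x₀, hy, hx, by rw [him]; norm_num, by rw [hre]; norm_num⟩

private lemma VL_contra (D : ℤ) (r : ℕ) (hr : 1 < r)
    (him1 : ((⟨1,1⟩ : ℤ√(-D))^r).im = 1)
    (p e : ℕ) (Dq : ℤ) (hp : p.Prime) (hp2 : p ≠ 2) (he : 1 ≤ e)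
    (hD : D = (p:ℤ)^e * Dq)
    (hcond : 5 ≤ p ∨ 2 ≤ e ∨ (p = 3 ∧ e = 1 ∧ Dq % 3 = 2)) : False := by
  obtain ⟨w, y₀, x₁, hy₀, him, hre⟩ := VL D p e Dq hp hp2 he hD hcond (r-1) (by omega)
  have hsplit : ((⟨1,1⟩ : ℤ√(-D))^((r-1)+1)).im
      = ((⟨1,1⟩ : ℤ√(-D))^(r-1)).re + ((⟨1,1⟩ : ℤ√(-D))^(r-1)).im := by
    rw [pow_succ, step_im]
  rw [show (r-1)+1 = r by omega, him1, him, hre] at hsplit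
  have key : (p:ℤ)^w * y₀ + (p:ℤ)^w * (p:ℤ)^e * x₁ = 0 := by
    rw [pow_add] at hsplit
    linarith
  have hne : ((p:ℤ))^w ≠ 0 := pow_ne_zero _ (by exact_mod_cast hp.ne_zero)
  have hY : y₀ = -((p:ℤ)^e * x₁) := by
    apply mul_left_cancel₀ hne
    linear_combination key
  apply hy₀
  rw [hY]
  exact dvd_neg.mpr (dvd_mul_of_dvd_left (dvd_pow_self ((p:ℤ)) (show e ≠ 0 by omega)) x₁)

theorem one_add_sqrt_neg_D_pow_eq_a_pm_sqrt_neg_D_of_two_mod_four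
    (D : ℤ) (hD : 0 < D) (hDmod : D % 4 = 2)
    (r : ℕ) (hr : 1 < r) (a : ℤ)
    (heq : (⟨1, 1⟩ : ℤ√(-D)) ^ r = ⟨a, 1⟩ ∨ (⟨1, 1⟩ : ℤ√(-D)) ^ r = ⟨a, -1⟩) :
    D = 2 ∧ r = 3 := by
  have h4 := mod4 D hDmod r
  have him1 : ((⟨1,1⟩ : ℤ√(-D))^r).im = 1 := by
    rcases heq with h | h
    · rw [h]
    · exfalso
      have himm : ((⟨1,1⟩ : ℤ√(-D))^r).im = -1 := by rw [h]
      rcases h4 with ⟨_,_,h6⟩|⟨_,_,h6⟩|⟨_,_,h6⟩|⟨_,_,h6⟩ <;> omega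
  have hr4 : r % 4 = 1 ∨ r % 4 = 3 := by
    rcases h4 with ⟨_,_,h6⟩|⟨_,_,h6⟩|⟨_,_,h6⟩|⟨_,_,h6⟩ <;> omega
  by_cases hD2 : D = 2
  · -- final part for D = 2
    subst hD2
    refine ⟨rfl, ?_⟩
    rcases hr4 with hc | hc
    · -- r = 4g+1, g ≥ 1 : contradiction
      exfalso
      set g := r / 4 with hg
      have hgpos : 0 < g := by omega
      have hrg : r = 4*g + 1 := by omega
      have hpowr : (⟨1,1⟩ : ℤ√(-2))^r = (⟨-7,-4⟩ : ℤ√(-2))^g * ⟨1,1⟩ := by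
        rw [hrg, pow_succ, pow_mul, pow4]
      obtain ⟨w, y₀, x₀, hy, hx, him, hre⟩ := L2 g hgpos
      rw [hpowr, Zsqrtd.im_mul, him, hre] at him1
      have hz : (2:ℤ)^(w+2) * (2*x₀ + y₀) = 0 := by
        have h1 : ((⟨1,1⟩ : ℤ√(-2)):ℤ√(-2)).im = 1 := rfl
        have h2 : ((⟨1,1⟩ : ℤ√(-2)):ℤ√(-2)).re = 1 := rfl
        rw [h1, h2] at him1
        linear_combination him1
      have h2ne : ((2:ℤ))^(w+2) ≠ 0 := by positivity
      have h0 : 2*x₀ + y₀ = 0 := (mul_eq_zero.mp hz).resolve_left h2ne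
      omega
    · set g := r / 4 with hg
      have hrg : r = 4*g + 3 := by omega
      rcases Nat.eq_zero_or_pos g with hg0 | hgpos
      · omega
      exfalso
      have hpowr : (⟨1,1⟩ : ℤ√(-2))^r = (⟨-7,-4⟩ : ℤ√(-2))^g * ⟨-5,1⟩ := by
        rw [hrg, pow_add, pow_mul, pow4, pow3]
      obtain ⟨w, y₀, x₀, hy, hx, him, hre⟩ := L2 g hgpos
      rw [hpowr, Zsqrtd.im_mul, him, hre] at him1
      have hz : (2:ℤ)^(w+2) * (2*x₀ - 5*y₀) = 0 := by
        have h1 : ((⟨-5,1⟩ : ℤ√(-2)):ℤ√(-2)).im = 1 := rfl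
        have h2 : ((⟨-5,1⟩ : ℤ√(-2)):ℤ√(-2)).re = -5 := rfl
        rw [h1, h2] at him1
        linear_combination him1
      have h2ne : ((2:ℤ))^(w+2) ≠ 0 := by positivity
      have h0 : 2*x₀ - 5*y₀ = 0 := (mul_eq_zero.mp hz).resolve_left h2ne
      omega
  · -- D ≠ 2 : derive a contradiction
    exfalso
    obtain ⟨M, hM⟩ : ∃ M : ℕ, D = 2*(M:ℤ) := ⟨(D/2).toNat, by omega⟩
    have hModd : M % 2 = 1 := by omega
    have hM1 : 1 < M := by
      rcases Nat.lt_or_ge 1 M with h | h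
      · exact h
      · interval_cases M <;> omega
    have hq : M.minFac.Prime := Nat.minFac_prime (by omega)
    obtain ⟨c, hc⟩ := M.minFac_dvd
    set q := M.minFac with hqdef
    have hq2 : q ≠ 2 := by
      rintro h2
      rw [h2] at hc
      omega
    by_cases hq3 : q = 3
    · rw [hq3] at hc
      by_cases h9 : 3 ∣ c
      · obtain ⟨c', rfl⟩ := h9
        exact VL_contra D r hr him1 3 2 (2*(c':ℤ)) (by norm_num) (by norm_num) (by norm_num)
          (by rw [hM, hc]; push_cast; ring) (by norm_num)
      · by_cases hd : (2*(c:ℤ)) % 3 = 2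
        · exact VL_contra D r hr him1 3 1 (2*(c:ℤ)) (by norm_num) (by norm_num) (by norm_num)
            (by rw [hM, hc]; push_cast; ring) (by right; right; exact ⟨rfl, rfl, hd⟩)
        · -- c % 3 = 2, c has a prime factor ≥ 5
          have hc3 : ¬ (3:ℤ) ∣ (c:ℤ) := by exact_mod_cast fun h => h9 (by exact_mod_cast h)
          have hcmod : c % 3 = 2 := by omega
          have hcodd : c % 2 = 1 := by omega
          have hc1 : c ≠ 1 := by omega
          have hq' : c.minFac.Prime := Nat.minFac_prime hc1
          obtain ⟨c'', hc''⟩ := c.minFac_dvd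
          set q' := c.minFac with hq'def
          have hq'2 : q' ≠ 2 := by
            rintro h2; rw [h2] at hc''; omega
          have hq'3 : q' ≠ 3 := by
            rintro h3
            apply h9
            rw [hc'', h3]
            exact ⟨c'', rfl⟩
          have hq'4 : q' ≠ 4 := by
            rintro h4; rw [h4] at hq'; norm_num at hq'
          have hq'5 : 5 ≤ q' := by
            have := hq'.two_le; omega
          exact VL_contra D r hr him1 q' 1 (6*(c'':ℤ)) hq' hq'2 (by norm_num)
            (by rw [hM, hc, hc'']; push_cast; ring) (by left; exact hq'5)
    · have hq4 : q ≠ 4 := by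
        rintro h4; rw [h4] at hq; norm_num at hq
      have hq5 : 5 ≤ q := by
        have := hq.two_le; omega
      exact VL_contra D r hr him1 q 1 (2*(c:ℤ)) hq hq2 (by norm_num)
        (by rw [hM, hc]; push_cast; ring) (by left; exact hq5)
end

section
/- Let (a, b, x) be positive integers with a > b > 3 satisfying 2^a + 2^b + 1 = x^2. If (a, b, x) is not of the form (2t, t+1, 2^t + 1) for a positive integer t, and (a, b, x) ≠ (5, 4, 7), and (a, b, x) ≠ (9, 4, 23), then a ≥ 6b − 8. -/
/-!
Write `b = p + 2`, `a = b + k` and `P = 2 ^ p`. Since `2 ^ b ∣ x ^ 2 - 1`, we have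
`x ≡ ±1 [ZMOD 2 ^ (b - 1)]`, so `x ^ 2 = (2 P σ + 1) ^ 2` for some integer `σ`, and the equation
becomes `2 ^ k + 1 = P σ ^ 2 + σ`. Apart from `(p, k) = (2, 1)`, i.e. `(5, 4, 7)`, this forces
`σ ≡ 1 [ZMOD P]`, and `σ = P u + 1` turns it into `2 ^ (k - p) = P ^ 2 u ^ 2 + (2 P + 1) u + 1`,
which in turn forces `u ≡ -1 [ZMOD 2 P]`. The residues `u = 0`, `u = -1`, `u = 2 P - 1` give the
family `a = 2 b - 2`, the solution `(9, 4, 23)` and nothing (the right side then lies strictly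
between two consecutive powers of `2`); every other `u` has `|u| > 2 P`, so `2 ^ (k - p) ≥ 4 P ^ 4`,
which is `a ≥ 6 b - 8`.
-/

theorem Int.two_pow_dvd_sub_one_or_add_one_of_dvd_sq_sub_one {n : ℕ} {x : ℤ}
    (h : 2 ^ (n + 2) ∣ x ^ 2 - 1) : 2 ^ (n + 1) ∣ x - 1 ∨ 2 ^ (n + 1) ∣ x + 1 := by
  have hodd : Odd x := by
    have h2 : (2 : ℤ) ∣ x ^ 2 - 1 := (dvd_pow_self 2 (by omega)).trans h
    rw [← even_iff_two_dvd, Int.even_sub_one] at h2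
    simpa [Int.odd_pow' two_ne_zero, Int.not_even_iff_odd] using h2
  obtain ⟨m, rfl⟩ := hodd
  have hm : 2 ^ n ∣ m * (m + 1) := by
    rw [← mul_dvd_mul_iff_left (four_ne_zero : (4 : ℤ) ≠ 0)]
    rwa [show (2 * m + 1) ^ 2 - 1 = 4 * (m * (m + 1)) by ring, pow_add, mul_comm] at h
  rcases Int.even_or_odd m with hm_even | hm_odd
  · left
    have : ¬ 2 ∣ m + 1 := by rw [← even_iff_two_dvd, Int.even_add_one]; exact not_not.2 hm_even
    rw [add_sub_cancel_right, pow_succ']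
    exact mul_dvd_mul_left 2 (Int.prime_two.pow_dvd_of_dvd_mul_right n this hm)
  · right
    have : ¬ 2 ∣ m := by rw [← even_iff_two_dvd]; exact Int.not_even_iff_odd.2 hm_odd
    rw [show 2 * m + 1 + 1 = 2 * (m + 1) by ring, pow_succ']
    exact mul_dvd_mul_left 2 (Int.prime_two.pow_dvd_of_dvd_mul_left n this hm)

theorem exists_two_pow_add_one_eq_of_eq_sq {p k : ℕ} {x : ℤ}
    (h : 2 ^ (p + 2 + k) + 2 ^ (p + 2) + 1 = x ^ 2) :
    ∃ σ : ℤ, 2 ^ k + 1 = 2 ^ p * σ ^ 2 + σ := by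
  have hdvd : 2 ^ (p + 2) ∣ x ^ 2 - 1 := ⟨2 ^ k + 1, by rw [← h]; ring⟩
  obtain ⟨σ, hσ⟩ : ∃ σ : ℤ, x ^ 2 = (2 ^ (p + 1) * σ + 1) ^ 2 := by
    rcases Int.two_pow_dvd_sub_one_or_add_one_of_dvd_sq_sub_one hdvd with ⟨σ, hσ⟩ | ⟨σ, hσ⟩
    · exact ⟨σ, by rw [← hσ]; ring⟩
    · exact ⟨-σ, by rw [mul_neg, ← hσ]; ring⟩
  refine ⟨σ, mul_left_cancel₀ (pow_ne_zero (p + 2) two_ne_zero : (2 : ℤ) ^ (p + 2) ≠ 0) ?_⟩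
  linear_combination h + hσ

theorem Nat.eq_two_and_eq_one_of_two_pow_eq_two_pow_add_two {m n : ℕ} (h : 2 ^ m = 2 ^ n + 2) :
    m = 2 ∧ n = 1 := by
  rcases m with _ | _ | _ | m <;> rcases n with _ | _ | n <;> simp [pow_succ] at h ⊢ <;> omega

theorem le_or_eq_two_and_eq_one_of_two_pow_add_one_eq {p k : ℕ} {σ : ℤ}
    (h : 2 ^ k + 1 = 2 ^ p * σ ^ 2 + σ) : p ≤ k ∨ (p = 2 ∧ k = 1) := by
  refine or_iff_not_imp_left.2 fun hkp => ?_
  have hP : 2 * 2 ^ k ≤ (2 : ℤ) ^ p := by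
    rw [← pow_succ']; exact pow_le_pow_right₀ one_le_two (by omega)
  have h2k : (0 : ℤ) < 2 ^ k := by positivity
  have hP0 : (0 : ℤ) ≤ 2 ^ p := by positivity
  have hσ : σ = -1 := by
    rcases lt_trichotomy σ (-1) with hσ | hσ | hσ
    · nlinarith [mul_nonneg hP0 (mul_nonneg_of_nonpos_of_nonpos (by omega : σ + 2 ≤ 0)
        (by omega : σ ≤ 0)), mul_nonneg hP0 (by omega : 0 ≤ -σ - 2)]
    · exact hσ
    · rcases lt_or_eq_of_le (show 0 ≤ σ by omega) with hσ | rfl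
      · nlinarith [mul_nonneg hP0 (mul_nonneg (by omega : 0 ≤ σ - 1) (by omega : 0 ≤ σ + 1))]
      · omega
  subst hσ
  exact Nat.eq_two_and_eq_one_of_two_pow_eq_two_pow_add_two
    (by exact_mod_cast (by linarith : (2 : ℤ) ^ p = 2 ^ k + 2))

theorem Int.two_mul_two_pow_le_of_two_pow_lt {m n : ℕ} (h : (2 : ℤ) ^ m < 2 ^ n) :
    2 * 2 ^ m ≤ (2 : ℤ) ^ n := by
  rw [← pow_succ']
  exact pow_le_pow_right₀ one_le_two ((pow_lt_pow_iff_right₀ one_lt_two).1 h)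

section

variable {p j : ℕ} {u : ℤ}

theorem succ_le_of_two_pow_eq (hp : 2 ≤ p) (hu : u ≠ 0)
    (h : 2 ^ j = (2 ^ p) ^ 2 * u ^ 2 + (2 * 2 ^ p + 1) * u + 1) : p + 1 ≤ j := by
  have hP : (4 : ℤ) ≤ 2 ^ p := by simpa using pow_le_pow_right₀ (one_le_two : (1 : ℤ) ≤ 2) hp
  refine (pow_le_pow_iff_right₀ (one_lt_two : (1 : ℤ) < 2)).1 ?_
  rw [pow_succ]
  rcases hu.lt_or_gt with hu | hu
  · nlinarith [mul_nonneg (by omega : (0 : ℤ) ≤ -u - 1)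
      (by nlinarith : (0 : ℤ) ≤ (2 ^ p) ^ 2 * (-u) - 2 * 2 ^ p - 1)]
  · nlinarith

theorem two_mul_two_pow_dvd_add_one_of_two_pow_eq (hp : p ≠ 0) (hj : p + 1 ≤ j)
    (h : 2 ^ j = (2 ^ p) ^ 2 * u ^ 2 + (2 * 2 ^ p + 1) * u + 1) : 2 * 2 ^ p ∣ u + 1 := by
  have h₁ : 2 * 2 ^ p ∣ (2 : ℤ) ^ j := by rw [← pow_succ']; exact pow_dvd_pow 2 hj
  have h₂ : 2 * 2 ^ p ∣ 2 ^ p * u * (2 ^ p * u + 2) := by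
    rw [mul_comm 2]
    exact mul_dvd_mul (dvd_mul_right _ u)
      (dvd_add (dvd_mul_of_dvd_left (dvd_pow_self 2 hp) u) dvd_rfl)
  rw [show u + 1 = 2 ^ j - 2 ^ p * u * (2 ^ p * u + 2) by linear_combination -h]
  exact dvd_sub h₁ h₂

theorem eq_zero_or_eq_three_or_four_mul_add_two_le_of_two_pow_eq (hp : 2 ≤ p)
    (h : 2 ^ j = (2 ^ p) ^ 2 * u ^ 2 + (2 * 2 ^ p + 1) * u + 1) :
    j = 0 ∨ (p = 2 ∧ j = 3) ∨ 4 * p + 2 ≤ j := by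
  have hP : (4 : ℤ) ≤ 2 ^ p := by simpa using pow_le_pow_right₀ (one_le_two : (1 : ℤ) ≤ 2) hp
  have le_iff {m n : ℕ} : (2 : ℤ) ^ m ≤ 2 ^ n ↔ m ≤ n := pow_le_pow_iff_right₀ one_lt_two
  rcases eq_or_ne u 0 with rfl | hu
  · left
    exact Nat.le_zero.1 (le_iff.1 (by simp [h]))
  obtain ⟨v, hv⟩ := two_mul_two_pow_dvd_add_one_of_two_pow_eq (by omega)
    (succ_le_of_two_pow_eq hp hu h) h
  rcases lt_trichotomy v 0 with hv0 | rfl | hv0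
  · right; right
    have hu : u ≤ -(2 * 2 ^ p + 1) := by nlinarith
    have hsq : (2 * 2 ^ p + 1) ^ 2 ≤ u ^ 2 := by nlinarith
    refine le_iff.1 ?_
    rw [show (2 : ℤ) ^ (4 * p + 2) = 4 * (2 ^ p) ^ 4 by ring, h]
    nlinarith [mul_le_mul_of_nonneg_left hsq (by nlinarith : (0 : ℤ) ≤ (2 ^ p) ^ 2 - 1),
      mul_le_mul_of_nonneg_right hu (by omega : (0 : ℤ) ≤ -u)]
  · right; left
    obtain rfl : u = -1 := by linarith
    obtain rfl : p = 2 := by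
      -- for `P ≥ 8`, `2 ^ j = P ^ 2 - 2 P` would lie strictly between `P ^ 2 / 2` and `P ^ 2`
      by_contra hp2
      have hP8 : (8 : ℤ) ≤ 2 ^ p := by
        simpa using pow_le_pow_right₀ (one_le_two : (1 : ℤ) ≤ 2) (by omega : 3 ≤ p)
      have key := Int.two_mul_two_pow_le_of_two_pow_lt (m := j) (n := 2 * p)
        (by rw [h, pow_mul']; nlinarith)
      rw [h, pow_mul'] at key
      nlinarith
    exact ⟨rfl, Nat.pow_right_injective le_rfl (by norm_num at h; exact_mod_cast h)⟩
  · obtain rfl | hv1 : v = 1 ∨ 2 ≤ v := by omega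
    · obtain rfl : u = 2 * 2 ^ p - 1 := by linarith
      -- `2 ^ j = 4 P ^ 4 - 4 P ^ 3 + 5 P ^ 2` would lie strictly between `2 P ^ 4` and `4 P ^ 4`
      have key := Int.two_mul_two_pow_le_of_two_pow_lt (m := 4 * p + 1) (n := j)
        (by rw [h, show (2 : ℤ) ^ (4 * p + 1) = 2 * (2 ^ p) ^ 4 by ring]; nlinarith)
      rw [h, show (2 : ℤ) ^ (4 * p + 1) = 2 * (2 ^ p) ^ 4 by ring] at key
      nlinarith
    · right; right
      have hu : 2 * 2 ^ p + 1 ≤ u := by nlinarith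
      have hsq : (2 * 2 ^ p + 1) ^ 2 ≤ u ^ 2 := by nlinarith
      refine le_iff.1 ?_
      rw [show (2 : ℤ) ^ (4 * p + 2) = 4 * (2 ^ p) ^ 4 by ring, h]
      nlinarith [mul_le_mul_of_nonneg_left hsq (sq_nonneg ((2 : ℤ) ^ p))]

end

theorem eq_or_five_mul_add_two_le_of_two_pow_add_one_eq {p k : ℕ} {σ : ℤ} (hp : 2 ≤ p)
    (h : 2 ^ k + 1 = 2 ^ p * σ ^ 2 + σ) : k = p ∨ (p = 2 ∧ (k = 1 ∨ k = 5)) ∨ 5 * p + 2 ≤ k := by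
  rcases le_or_eq_two_and_eq_one_of_two_pow_add_one_eq h with hpk | ⟨rfl, rfl⟩
  · obtain ⟨j, rfl⟩ := Nat.exists_eq_add_of_le hpk
    obtain ⟨u, rfl⟩ : ∃ u, σ = 2 ^ p * u + 1 := ⟨2 ^ j - σ ^ 2, by linear_combination -h⟩
    have hj : 2 ^ j = (2 ^ p) ^ 2 * u ^ 2 + (2 * 2 ^ p + 1) * u + 1 :=
      mul_left_cancel₀ (pow_ne_zero p two_ne_zero) (by linear_combination h)
    rcases eq_zero_or_eq_three_or_four_mul_add_two_le_of_two_pow_eq hp hj with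
      rfl | ⟨rfl, rfl⟩ | hj <;> omega
  · exact Or.inr (Or.inl ⟨rfl, Or.inl rfl⟩)

theorem a_ge_six_b_sub_eight_general
    (a b x : ℕ) (hb : 3 < b) (hab : a > b)
    (heq : 2 ^ a + 2 ^ b + 1 = x ^ 2)
    (hnot1 : ¬∃ t : ℕ, 0 < t ∧ a = 2 * t ∧ b = t + 1 ∧ x = 2 ^ t + 1)
    (hnot2 : (a, b, x) ≠ (5, 4, 7)) (hnot3 : (a, b, x) ≠ (9, 4, 23)) :
    a ≥ 6 * b - 8 := by
  obtain ⟨p, rfl⟩ : ∃ p, b = p + 2 := ⟨b - 2, by omega⟩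
  obtain ⟨k, rfl⟩ : ∃ k, a = p + 2 + k := ⟨a - (p + 2), by omega⟩
  obtain ⟨σ, hσ⟩ := exists_two_pow_add_one_eq_of_eq_sq (x := (x : ℤ)) (by exact_mod_cast heq)
  have x_eq (y : ℕ) (hy : 2 ^ (p + 2 + k) + 2 ^ (p + 2) + 1 = y ^ 2) : x = y :=
    Nat.pow_left_injective two_ne_zero (heq.symm.trans hy)
  rcases eq_or_five_mul_add_two_le_of_two_pow_add_one_eq (by omega) hσ with
    rfl | ⟨rfl, rfl | rfl⟩ | hk
  · exact absurd ⟨k + 1, by omega, by ring, rfl, x_eq _ (by ring)⟩ hnot1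
  · exact absurd (by rw [x_eq 7 rfl]) hnot2
  · exact absurd (by rw [x_eq 23 rfl]) hnot3
  · omega

theorem a_ge_six_b_sub_eight
    (a b x : ℕ) (ha : 0 < a) (hb : 3 < b) (hx : 0 < x) (hab : a > b)
    (heq : 2 ^ a + 2 ^ b + 1 = x ^ 2)
    (hnot1 : ¬∃ t : ℕ, 0 < t ∧ a = 2 * t ∧ b = t + 1 ∧ x = 2 ^ t + 1)
    (hnot2 : (a, b, x) ≠ (5, 4, 7)) (hnot3 : (a, b, x) ≠ (9, 4, 23)) :
    a ≥ 6 * b - 8 :=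
  a_ge_six_b_sub_eight_general a b x hb hab heq hnot1 hnot2 hnot3
end

section
/- Let m be a positive integer and set D = m² + 1. If v and w are coprime positive integers and N is an integer with v² − D·w² = N and 0 < |N| < √D, then N = 1 or N = −1. -/
/-!
Multiplying `v + w√D` by `m - √D`, a unit of norm `-1`, gives
`(v m - w D) + (w m - v)√D`: the norm changes sign, and when `|N| ≤ m` the bound
`(m - 1) w < v < (m + 1) w` makes the new second coordinate smaller than `w` in absolute value.
The map is unimodular, so coprimality survives, and descending on `w` ends at a coprime solution
with `w = 0`, i.e. `v = 1` and norm `1`.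
-/

namespace PellDescent

variable {m : ℤ}

section

variable {v w N : ℤ}

lemma sq_sub_mul_sq_descent (h : v ^ 2 - (m ^ 2 + 1) * w ^ 2 = N) :
    (v * m - w * (m ^ 2 + 1)) ^ 2 - (m ^ 2 + 1) * (w * m - v) ^ 2 = -N := by
  linear_combination -h

lemma isCoprime_descent (h : IsCoprime v w) :
    IsCoprime (v * m - w * (m ^ 2 + 1)) (w * m - v) := by
  obtain ⟨x, y, hxy⟩ := h
  exact ⟨-x * m - y, -x * (m ^ 2 + 1) - y * m, by linear_combination hxy⟩

lemma abs_mul_sub_lt (hm : 0 < m) (hNm : |N| ≤ m) (hv : 0 ≤ v) (hw : 0 < w)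
    (h : v ^ 2 - (m ^ 2 + 1) * w ^ 2 = N) : |w * m - v| < w := by
  have hN := abs_le.mp hNm
  have hmw : m ≤ m * w ^ 2 := le_mul_of_one_le_right hm.le (one_le_pow₀ hw)
  have hlow : |(m - 1) * w| < v := abs_lt_of_sq_lt_sq (by nlinarith) hv
  have hhigh : |v| < (m + 1) * w := abs_lt_of_sq_lt_sq (by nlinarith) (by positivity)
  rw [abs_lt]
  constructor <;> linarith [le_abs_self ((m - 1) * w), le_abs_self v]

end

theorem natAbs_eq_one_of_sq_sub_mul_sq_eq {v w : ℕ} {N : ℤ} (hN0 : N ≠ 0) (hNm : |N| ≤ m)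
    (hcop : Nat.Coprime v w) (h : (v : ℤ) ^ 2 - (m ^ 2 + 1) * (w : ℤ) ^ 2 = N) :
    N.natAbs = 1 := by
  induction w using Nat.strong_induction_on generalizing v N with
  | _ w ih =>
    rcases Nat.eq_zero_or_pos w with rfl | hw
    · obtain rfl : v = 1 := (Nat.coprime_zero_right v).mp hcop
      simp [← h]
    have hm : 0 < m := (abs_pos.mpr hN0).trans_le hNm
    set a : ℤ := v * m - w * (m ^ 2 + 1)
    set b : ℤ := w * m - v
    have hb : b.natAbs < w := by
      have := abs_mul_sub_lt hm hNm (Nat.cast_nonneg v) (Nat.cast_pos.mpr hw) h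
      rw [← Int.natCast_natAbs] at this
      exact_mod_cast this
    have hcop' : Nat.Coprime a.natAbs b.natAbs :=
      Int.isCoprime_iff_gcd_eq_one.mp (isCoprime_descent (Int.isCoprime_iff_gcd_eq_one.mpr hcop))
    have h' : (a.natAbs : ℤ) ^ 2 - (m ^ 2 + 1) * (b.natAbs : ℤ) ^ 2 = -N := by
      rw [Int.natAbs_sq, Int.natAbs_sq]
      exact sq_sub_mul_sq_descent h
    simpa using ih b.natAbs hb (neg_ne_zero.mpr hN0) (by rwa [abs_neg]) hcop' h'

end PellDescent

theorem pell_small_norm_eq_pm_one_general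
    (m : ℕ) (D : ℕ) (hD : D = m ^ 2 + 1)
    (v w : ℕ) (hcop : Nat.gcd v w = 1)
    (N : ℤ) (hN : (v : ℤ) ^ 2 - (D : ℤ) * (w : ℤ) ^ 2 = N)
    (hN0 : N ≠ 0) (hNs : (|N| : ℝ) < Real.sqrt D) :
    N = 1 ∨ N = -1 := by
  subst hD
  have hNsq : N ^ 2 < (m : ℤ) ^ 2 + 1 := by
    have := (Real.lt_sqrt (abs_nonneg _)).mp hNs
    rw [sq_abs] at this
    exact_mod_cast this
  have hNm : |N| ≤ m := abs_le_of_sq_le_sq (by omega) (Nat.cast_nonneg m)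
  have h : (v : ℤ) ^ 2 - ((m : ℤ) ^ 2 + 1) * (w : ℤ) ^ 2 = N := by exact_mod_cast hN
  exact Int.natAbs_eq_iff.mp (PellDescent.natAbs_eq_one_of_sq_sub_mul_sq_eq hN0 hNm hcop h)

theorem pell_small_norm_eq_pm_one
    (m : ℕ) (hm : 0 < m) (D : ℕ) (hD : D = m ^ 2 + 1)
    (v w : ℕ) (hv : 0 < v) (hw : 0 < w) (hcop : Nat.gcd v w = 1)
    (N : ℤ) (hN : (v : ℤ) ^ 2 - (D : ℤ) * (w : ℤ) ^ 2 = N)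
    (hN0 : N ≠ 0) (hNs : (|N| : ℝ) < Real.sqrt D) :
    N = 1 ∨ N = -1 :=
  pell_small_norm_eq_pm_one_general m D hD v w hcop N hN hN0 hNs
end

section
/- Let p be an odd prime and let a > b be positive integers such that p^a − p^b + 1 = x² for some positive integer x. Then b divides a. -/
/-!
Write `Q = p^b - 1`, so that `x² + Q = p^a`, and pick `n = b m` with `a ≤ n < a + b`. Expanding
`(1 + √-Q)^m` gives `X² + Q Y² = p^n` with `Y ≡ 2^(m-1) (mod p)`. Then `p^a` divides
`(X - xY)(X + xY) = p^n - p^a Y²`, and since `p ∤ 2xY` it divides one of the two factors. The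
Brahmagupta identity bounds `Q (X ∓ xY)²` by `p^n p^a < Q p^(2a)`, so that factor vanishes.
Hence `p^a Y² = p^n`, and `p ∤ Y` forces `n = a`.
-/

lemma exists_le_mul_succ_lt_add {a b : ℕ} (ha : 0 < a) (hb : 0 < b) :
    ∃ m, a ≤ b * (m + 1) ∧ b * (m + 1) < a + b := by
  refine ⟨(a - 1) / b, ?_⟩
  have hdiv := Nat.div_add_mod (a - 1) b
  have hmod := Nat.mod_lt (a - 1) hb
  rw [Nat.mul_succ]
  constructor <;> omega

/-- The coordinates of `(1 + √(1 - q))^(m+1)` in `ℤ[√(1 - q)]`. -/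
lemma exists_sq_add_sub_one_mul_sq_eq_pow {R : Type*} [CommRing R] {q : ℤ}
    (hq : (q : R) = 0) (m : ℕ) :
    ∃ X Y : ℤ, X ^ 2 + (q - 1) * Y ^ 2 = q ^ (m + 1) ∧ (X : R) = 2 ^ m ∧ (Y : R) = 2 ^ m := by
  induction m with
  | zero => exact ⟨1, 1, by ring, by simp, by simp⟩
  | succ m ih =>
    obtain ⟨X, Y, hXY, hX, hY⟩ := ih
    refine ⟨X + (1 - q) * Y, X + Y, by linear_combination q * hXY, ?_, ?_⟩ <;>
      push_cast [hq, hX, hY] <;> ring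

lemma pow_lt_pow_sub_one_mul_pow {P : ℤ} (hP : 3 ≤ P) {a b n : ℕ} (hb : 0 < b) (hn : n < a + b) :
    P ^ n < (P ^ b - 1) * P ^ a := by
  have hpred : P ^ (b - 1) < P ^ b - 1 := by
    have hsucc : P ^ b = P ^ (b - 1) * P := by rw [← pow_succ, Nat.sub_add_cancel hb]
    nlinarith [one_le_pow₀ (n := b - 1) (by linarith : (1 : ℤ) ≤ P)]
  calc P ^ n ≤ P ^ (b - 1 + a) := pow_le_pow_right₀ (by linarith) (by omega)
    _ = P ^ (b - 1) * P ^ a := pow_add _ _ _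
    _ < (P ^ b - 1) * P ^ a := by gcongr

lemma mul_sq_sub_le_mul (Q x X Y : ℤ) :
    Q * (X - x * Y) ^ 2 ≤ (X ^ 2 + Q * Y ^ 2) * (x ^ 2 + Q) := by
  have brahmagupta :
      (X ^ 2 + Q * Y ^ 2) * (x ^ 2 + Q) = (x * X + Q * Y) ^ 2 + Q * (X - x * Y) ^ 2 := by
    ring
  rw [brahmagupta]
  exact le_add_of_nonneg_left (sq_nonneg _)

lemma Int.eq_zero_of_dvd_of_sq_lt {N z : ℤ} (h : N ∣ z) (hz : z ^ 2 < N ^ 2) : z = 0 :=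
  Int.eq_zero_of_abs_lt_dvd ((abs_dvd N z).mpr h) (sq_lt_sq.mp hz)

lemma Prime.pow_dvd_sub_or_pow_dvd_add {P x X Y : ℤ} (hP : Prime P) (hP2 : ¬P ∣ 2)
    (hx : ¬P ∣ x) (hY : ¬P ∣ Y) {a : ℕ} (h : P ^ a ∣ (X - x * Y) * (X + x * Y)) :
    P ^ a ∣ X - x * Y ∨ P ^ a ∣ X + x * Y := by
  by_cases hsub : P ∣ X - x * Y
  · have hadd : ¬P ∣ X + x * Y := by
      intro hadd
      have h2xY : P ∣ 2 * x * Y :=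
        (show X + x * Y - (X - x * Y) = 2 * x * Y by ring) ▸ dvd_sub hadd hsub
      rcases hP.dvd_mul.mp h2xY with h2x | h
      · exact (hP.dvd_mul.mp h2x).elim hP2 hx
      · exact hY h
    exact .inl (hP.pow_dvd_of_dvd_mul_right a hadd h)
  · exact .inr (hP.pow_dvd_of_dvd_mul_left a hsub h)

theorem Prime.eq_of_sq_add_mul_sq_eq_pow {P Q x X Y : ℤ} {a n : ℕ} (hP : Prime P) (hP2 : ¬P ∣ 2)
    (hx : ¬P ∣ x) (hY : ¬P ∣ Y) (hQ : 0 < Q) (hxQ : x ^ 2 + Q = P ^ a)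
    (hXY : X ^ 2 + Q * Y ^ 2 = P ^ n) (han : a ≤ n) (hlt : P ^ n < Q * P ^ a) : n = a := by
  obtain ⟨k, rfl⟩ := Nat.exists_eq_add_of_le han
  have hprod : (X - x * Y) * (X + x * Y) = P ^ a * (P ^ k - Y ^ 2) := by
    linear_combination hXY - Y ^ 2 * hxQ
  have hPa : 0 < P ^ a := hxQ ▸ by positivity
  have hsmall : ∀ z, P ^ a ∣ z → Q * z ^ 2 ≤ P ^ (a + k) * P ^ a → z = 0 := by
    intro z hz hle
    refine Int.eq_zero_of_dvd_of_sq_lt hz (lt_of_mul_lt_mul_left ?_ hQ.le)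
    calc Q * z ^ 2 ≤ P ^ (a + k) * P ^ a := hle
      _ < Q * P ^ a * P ^ a := mul_lt_mul_of_pos_right hlt hPa
      _ = Q * (P ^ a) ^ 2 := by ring
  have hzero : (X - x * Y) * (X + x * Y) = 0 := by
    rcases hP.pow_dvd_sub_or_pow_dvd_add hP2 hx hY ⟨_, hprod⟩ with h | h
    · rw [hsmall _ h (hXY ▸ hxQ ▸ mul_sq_sub_le_mul Q x X Y), zero_mul]
    · rw [hsmall _ h (hXY ▸ hxQ ▸ by simpa using mul_sq_sub_le_mul Q x X (-Y)), mul_zero]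
  have hYk : Y ^ 2 = P ^ k := by
    rw [hprod] at hzero
    linarith [(mul_eq_zero.mp hzero).resolve_left (pow_ne_zero a hP.ne_zero)]
  cases k with
  | zero => rfl
  | succ k => exact absurd (hP.dvd_of_dvd_pow (hYk ▸ dvd_pow_self P k.succ_ne_zero)) hY

theorem b_dvd_a_of_p_pow_sub_p_pow_add_one_eq_sq_general
    (p a b x : ℕ) (hp : p.Prime) (hodd : Odd p)
    (ha : 0 < a) (hb : 0 < b)
    (heq : (p : ℤ) ^ a - (p : ℤ) ^ b + 1 = (x : ℤ) ^ 2) :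
    b ∣ a := by
  have : Fact p.Prime := ⟨hp⟩
  have hP : Prime (p : ℤ) := Nat.prime_iff_prime_int.mp hp
  have hp3 : (3 : ℤ) ≤ p := by
    obtain ⟨k, rfl⟩ := hodd
    have := hp.two_le
    omega
  have hP2 : ¬(p : ℤ) ∣ 2 := fun h => by linarith [Int.le_of_dvd two_pos h]
  have hx : ¬(p : ℤ) ∣ x := fun h => hP.not_dvd_one <| by
    rw [show (1 : ℤ) = x ^ 2 - p ^ a + p ^ b by linarith]
    exact ((dvd_pow h two_ne_zero).sub (dvd_pow_self _ ha.ne')).add (dvd_pow_self _ hb.ne')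
  obtain ⟨m, ham, hmb⟩ := exists_le_mul_succ_lt_add ha hb
  obtain ⟨X, Y, hXY, -, hY⟩ :=
    exists_sq_add_sub_one_mul_sq_eq_pow (R := ZMod p) (q := (p : ℤ) ^ b) (by simp [hb.ne']) m
  have h2 : (2 : ZMod p) ≠ 0 := by
    exact_mod_cast (ZMod.intCast_zmod_eq_zero_iff_dvd 2 p).not.mpr hP2
  have hpY : ¬(p : ℤ) ∣ Y := by
    rw [← ZMod.intCast_zmod_eq_zero_iff_dvd, hY]
    exact pow_ne_zero m h2
  have hQ : 0 < (p : ℤ) ^ b - 1 := by linarith [le_self_pow₀ (by linarith : (1 : ℤ) ≤ p) hb.ne']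
  exact ⟨m + 1, (hP.eq_of_sq_add_mul_sq_eq_pow hP2 hx hpY hQ (by linarith)
    (hXY.trans (pow_mul _ _ _).symm) ham (pow_lt_pow_sub_one_mul_pow hp3 hb hmb)).symm⟩

theorem b_dvd_a_of_p_pow_sub_p_pow_add_one_eq_sq
    (p a b x : ℕ) (hp : p.Prime) (hodd : Odd p)
    (ha : 0 < a) (hb : 0 < b) (hx : 0 < x) (hab : a > b)
    (heq : (p : ℤ) ^ a - (p : ℤ) ^ b + 1 = (x : ℤ) ^ 2) :
    b ∣ a :=
  b_dvd_a_of_p_pow_sub_p_pow_add_one_eq_sq_general p a b x hp hodd ha hb heq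
end

section
/- Let p be an odd prime and let a, b, x be positive integers with a odd such that p^a + p^b + 1 = x². Then p ≡ 3 (mod 4) and b is even. -/
/-!
Reduce modulo 4. Odd residues are `±1`, so `x² ≡ 1` and the equation becomes `p^a + p^b ≡ 0`.
This rules out `p ≡ 1`, which would give `2`; hence `p ≡ -1`, and then `-1 + (-1)^b ≡ 0` because
`a` is odd, which forces `b` to be even.
-/

namespace ZMod

theorem natCast_eq_one_or_neg_one_of_odd {n : ℕ} (hn : Odd n) :
    (n : ZMod 4) = 1 ∨ (n : ZMod 4) = -1 := by
  have hmod : n % 4 = 1 ∨ n % 4 = 3 := by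
    have := Nat.odd_iff.mp hn
    omega
  rw [← ZMod.natCast_mod n 4]
  rcases hmod with h | h <;> rw [h] <;> decide

theorem natCast_sq_eq_one_of_odd {n : ℕ} (hn : Odd n) : (n : ZMod 4) ^ 2 = 1 := by
  rcases natCast_eq_one_or_neg_one_of_odd hn with h | h <;> rw [h] <;> decide

end ZMod

theorem p_mod_four_and_b_even_of_sq_general
    (p a b x : ℕ) (hodd : Odd p)
    (haodd : Odd a)
    (heq : p ^ a + p ^ b + 1 = x ^ 2) :
    p % 4 = 3 ∧ Even b := by
  have hxodd : Odd x := by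
    have : Odd (x ^ 2) := heq ▸ (hodd.pow.add_odd hodd.pow).add_one
    exact (Nat.odd_pow_iff two_ne_zero).mp this
  have hsum : (p : ZMod 4) ^ a + (p : ZMod 4) ^ b = 0 := by
    have := congrArg (Nat.cast : ℕ → ZMod 4) heq
    push_cast at this
    rw [ZMod.natCast_sq_eq_one_of_odd hxodd] at this
    linear_combination this
  rcases ZMod.natCast_eq_one_or_neg_one_of_odd hodd with hp | hp
  · rw [hp, one_pow, one_pow] at hsum
    exact absurd hsum (by decide)
  · refine ⟨by rw [← ZMod.val_natCast, hp]; rfl, ?_⟩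
    rw [hp, haodd.neg_one_pow] at hsum
    exact (neg_one_pow_eq_one_iff_even (R := ZMod 4) (by decide)).mp (by linear_combination hsum)

theorem p_mod_four_and_b_even_of_sq
    (p a b x : ℕ) (hp : p.Prime) (hodd : Odd p)
    (ha : 0 < a) (hb : 0 < b) (hx : 0 < x) (haodd : Odd a)
    (heq : p ^ a + p ^ b + 1 = x ^ 2) :
    p % 4 = 3 ∧ Even b :=
  p_mod_four_and_b_even_of_sq_general p a b x hodd haodd heq
end
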